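/- arXiv:2005.09628 — 4 statements merged into one kernel-verified Lean document; each statement's English description precedes it below -/
import Mathlib

section
/- The intersection of the Newton polytope of the inflated symmetric Grothendieck polynomial G_{h,λ}(x_1,...,x_m) with the hyperplane x_1+...+x_m = |λ|+k equals the Newton polytope of the Schur polynomial s_{λ^{(k)}}, i.e., the λ^{(k)}-permutohedron. -/
/-- `mu` is a partition with at most `m` parts (weakly decreasing entries). -/
def IsPartition (m : ℕ) (mu : Fin m → ℕ) : Prop := ∀ i j : Fin m, i ≤ j → mu j ≤ mu i

/-- A filling of the skew shape `μ/λ` that increases strictly along each row and each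
column, with entries in row `r` (0-indexed) taken from `{1, ..., h·r}` (i.e. row `r+1`
in 1-indexed terms gets entries from `{1, ..., h(r+1-1)}`). These are the fillings
counted by `b_{h,λμ}`. -/
structure SkewFilling (m h : ℕ) (lam mu : Fin m → ℕ) where
  entry : Fin m → ℕ → ℕ
  one_le : ∀ i j, lam i ≤ j → j < mu i → 1 ≤ entry i j
  upper : ∀ i j, lam i ≤ j → j < mu i → entry i j ≤ h * i.1
  row_strict : ∀ i j k, lam i ≤ j → j < k → k < mu i → entry i j < entry i k
  col_strict : ∀ i k : Fin m, ∀ j, i < k → lam i ≤ j → j < mu i → lam k ≤ j → j < mu k →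
    entry i j < entry k j

/-- `μ ∈ A(h,λ)`: `μ` is a partition containing `λ` with `b_{h,λμ} ≠ 0`,
i.e. admitting at least one valid skew filling of `μ/λ`. -/
def AMem (m h : ℕ) (lam mu : Fin m → ℕ) : Prop :=
  IsPartition m mu ∧ (∀ i, lam i ≤ mu i) ∧ Nonempty (SkewFilling m h lam mu)

/-- A box may be added to row `r` of `nu` (relative to base partition `lam`):
fewer than `h·r` boxes have been added to row `r` so far, and the result is
still a partition. -/
def Addable (m h : ℕ) (lam nu : Fin m → ℕ) (r : Fin m) : Prop :=
  nu r - lam r < h * r.1 ∧ ∀ q : Fin m, q.1 + 1 = r.1 → nu r < nu q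

open scoped Classical in
/-- One step in the construction of the sequence of dominating partitions:
add a box in the smallest addable row (if any). -/
noncomputable def domStep (m h : ℕ) (lam nu : Fin m → ℕ) : Fin m → ℕ :=
  if hne : (Finset.univ.filter (Addable m h lam nu)).Nonempty then
    Function.update nu ((Finset.univ.filter (Addable m h lam nu)).min' hne)
      (nu ((Finset.univ.filter (Addable m h lam nu)).min' hne) + 1)
  else nu

/-- The sequence of dominating partitions `λ^{(0)} = λ, λ^{(1)}, λ^{(2)}, ...`
for the inflated symmetric Grothendieck polynomial `G_{h,λ}`. -/
noncomputable def domSeq (m h : ℕ) (lam : Fin m → ℕ) : ℕ → Fin m → ℕ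
  | 0 => lam
  | k + 1 => domStep m h lam (domSeq m h lam k)

/-- Dominance order: `a` dominates `b` if all partial sums of `a` are at least
those of `b`. -/
def Dominates (m : ℕ) (a b : Fin m → ℕ) : Prop :=
  ∀ r : Fin m, ∑ i ∈ Finset.univ.filter (fun i => i ≤ r), b i ≤
    ∑ i ∈ Finset.univ.filter (fun i => i ≤ r), a i

/-- The `ν`-permutohedron: the convex hull of all coordinate permutations of
`(ν_1, ..., ν_m)` in `ℝ^m`; this is the Newton polytope of the Schur polynomial `s_ν`. -/
def permPoly (m : ℕ) (nu : Fin m → ℕ) : Set (Fin m → ℝ) :=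
  convexHull ℝ {x : Fin m → ℝ | ∃ σ : Equiv.Perm (Fin m), x = fun i => (nu (σ i) : ℝ)}

/-- The Newton polytope of the inflated symmetric Grothendieck polynomial
`G_{h,λ}(x) = Σ_{μ ∈ A(h,λ)} (−1)^{|μ/λ|} b_{h,λμ} s_μ(x)`: since within each
homogeneous degree all coefficients have the same sign (no cancellation), it is the
convex hull of the exponent vectors of the `s_μ`, `μ ∈ A(h,λ)`, i.e. the convex hull
of the `S_m`-orbits of the partitions in `A(h,λ)`. -/
def NewtG (m h : ℕ) (lam : Fin m → ℕ) : Set (Fin m → ℝ) :=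
  convexHull ℝ {x : Fin m → ℝ | ∃ mu : Fin m → ℕ, AMem m h lam mu ∧
    ∃ σ : Equiv.Perm (Fin m), x = fun i => (mu (σ i) : ℝ)}


namespace NGH

open Finset

variable {m : ℕ}

def orbit (ν : Fin m → ℝ) : Set (Fin m → ℝ) :=
  {x | ∃ σ : Equiv.Perm (Fin m), x = fun i => ν (σ i)}

noncomputable def permLM (π : Equiv.Perm (Fin m)) : (Fin m → ℝ) →ₗ[ℝ] (Fin m → ℝ) where
  toFun x := fun i => x (π i)
  map_add' := by intros; rfl
  map_smul' := by intros; rfl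

lemma permLM_image_orbit (π : Equiv.Perm (Fin m)) (ν : Fin m → ℝ) :
    permLM π '' orbit ν = orbit ν := by
  ext y; constructor
  · rintro ⟨z, ⟨σ, rfl⟩, rfl⟩
    exact ⟨π.trans σ, rfl⟩
  · rintro ⟨σ, rfl⟩
    refine ⟨fun i => ν (σ (π.symm i)), ⟨π.symm.trans σ, rfl⟩, ?_⟩
    funext i
    simp [permLM]

lemma mem_hull_perm (π : Equiv.Perm (Fin m)) (ν x : Fin m → ℝ)
    (hx : x ∈ convexHull ℝ (orbit ν)) :
    (fun i => x (π i)) ∈ convexHull ℝ (orbit ν) := by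
  have h1 : permLM π x ∈ permLM π '' (convexHull ℝ (orbit ν)) := Set.mem_image_of_mem _ hx
  rw [(permLM π).image_convexHull, permLM_image_orbit] at h1
  exact h1

lemma rado_sorted (x : Fin m → ℝ) (hx : Antitone x) :
    ∀ (d : ℕ) (ν : Fin m → ℝ), ((univ : Finset (Fin m)).filter fun i => ν i ≠ x i).card ≤ d →
    Antitone ν →
    (∀ s : ℕ, ∑ i ∈ univ.filter (fun i : Fin m => i.1 < s), x i ≤
      ∑ i ∈ univ.filter (fun i : Fin m => i.1 < s), ν i) →
    (∑ i, x i = ∑ i, ν i) →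
    x ∈ convexHull ℝ (orbit ν) := by
  intro d
  induction d with
  | zero =>
    intro ν hcard hν hmaj hsum
    have hall : ∀ i, ν i = x i := by
      intro i
      by_contra hne
      have hmem : i ∈ (univ : Finset (Fin m)).filter (fun i => ν i ≠ x i) :=
        mem_filter.2 ⟨mem_univ i, hne⟩
      have := card_pos.2 ⟨i, hmem⟩
      omega
    have hxν : x = ν := funext fun i => (hall i).symm
    rw [hxν]
    exact subset_convexHull ℝ _ ⟨Equiv.refl _, rfl⟩
  | succ d ih =>
    intro ν hcard hν hmaj hsum
    by_cases hD : ((univ : Finset (Fin m)).filter fun i => ν i ≠ x i).Nonempty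
    swap
    · have hall : ∀ i, ν i = x i := by
        intro i
        by_contra hne
        exact hD ⟨i, mem_filter.2 ⟨mem_univ i, hne⟩⟩
      have hxν : x = ν := funext fun i => (hall i).symm
      rw [hxν]
      exact subset_convexHull ℝ _ ⟨Equiv.refl _, rfl⟩
    -- find j : smallest index with ν j < x j
    have hExj : ((univ : Finset (Fin m)).filter fun l => ν l < x l).Nonempty := by
      by_contra hno
      rw [not_nonempty_iff_eq_empty, filter_eq_empty_iff] at hno
      push_neg at hno
      obtain ⟨i0, hi0⟩ := hD
      have hne : ν i0 ≠ x i0 := (mem_filter.1 hi0).2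
      have hno' : ∀ l : Fin m, x l ≤ ν l := by
        intro l
        exact hno (mem_univ l)
      have hlt : ∑ i, x i < ∑ i, ν i := by
        refine Finset.sum_lt_sum (fun i _ => hno' i) ⟨i0, mem_univ _, ?_⟩
        exact lt_of_le_of_ne (hno' i0) (Ne.symm hne)
      linarith
    set Tj := (univ : Finset (Fin m)).filter fun l => ν l < x l with hTj
    obtain ⟨j, hjmem, hjmin⟩ : ∃ j, j ∈ Tj ∧ ∀ l ∈ Tj, j ≤ l :=
      ⟨Tj.min' hExj, Tj.min'_mem hExj, fun l hl => Tj.min'_le l hl⟩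
    have hj : ν j < x j := (mem_filter.1 hjmem).2
    have hlle : ∀ l : Fin m, l < j → x l ≤ ν l := by
      intro l hl
      by_contra hc
      push_neg at hc
      exact absurd (hjmin l (mem_filter.2 ⟨mem_univ l, hc⟩)) (not_le.2 hl)
    -- split prefix sum at j
    have hsplit : ∀ f : Fin m → ℝ,
        ∑ i ∈ univ.filter (fun i : Fin m => i.1 < j.1 + 1), f i =
        (∑ i ∈ univ.filter (fun i : Fin m => i.1 < j.1), f i) + f j := by
      intro f
      have hset : univ.filter (fun i : Fin m => i.1 < j.1 + 1) =
          insert j (univ.filter (fun i : Fin m => i.1 < j.1)) := by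
        ext i
        simp only [mem_filter, mem_univ, true_and, mem_insert]
        constructor
        · intro hi
          rcases Nat.lt_or_ge i.1 j.1 with h | h
          · exact Or.inr h
          · exact Or.inl (Fin.ext (by omega))
        · rintro (rfl | hi) <;> omega
      rw [hset, sum_insert (by simp)]
      ring
    -- find i : largest index < j with x i < ν i
    have hExi : ((univ : Finset (Fin m)).filter fun l => l < j ∧ x l < ν l).Nonempty := by
      by_contra hno
      rw [not_nonempty_iff_eq_empty, filter_eq_empty_iff] at hno
      push_neg at hno
      have hno2 : ∀ l : Fin m, l < j → ν l ≤ x l := by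
        intro l hl
        exact hno (mem_univ l) hl
      have heq : ∑ i ∈ univ.filter (fun i : Fin m => i.1 < j.1), x i =
          ∑ i ∈ univ.filter (fun i : Fin m => i.1 < j.1), ν i := by
        refine Finset.sum_congr rfl (fun l hl => ?_)
        have hlj : l < j := by
          have := (mem_filter.1 hl).2
          exact Fin.lt_def.2 this
        have h1 := hlle l hlj
        have h2 := hno2 l hlj
        linarith
      have := hmaj (j.1 + 1)
      rw [hsplit x, hsplit ν, heq] at this
      linarith
    set Ti := (univ : Finset (Fin m)).filter fun l => l < j ∧ x l < ν l with hTi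
    obtain ⟨i, himem, himax'⟩ : ∃ i, i ∈ Ti ∧ ∀ l ∈ Ti, l ≤ i :=
      ⟨Ti.max' hExi, Ti.max'_mem hExi, fun l hl => Ti.le_max' l hl⟩
    have hiprop := (mem_filter.1 himem).2
    have hij : i < j := hiprop.1
    have hi : x i < ν i := hiprop.2
    have himax : ∀ l, l < j → x l < ν l → l ≤ i := fun l h1 h2 =>
      himax' l (mem_filter.2 ⟨mem_univ l, h1, h2⟩)
    have hmid : ∀ l, i < l → l < j → ν l = x l := by
      intro l h1 h2
      have hle := hlle l h2
      rcases eq_or_lt_of_le hle with h | h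
      · exact h.symm
      · exact absurd (himax l h2 h) (not_le.2 h1)
    -- set up the transfer
    set δ := min (ν i - x i) (x j - ν j) with hδdef
    have hδi : δ ≤ ν i - x i := min_le_left _ _
    have hδj : δ ≤ x j - ν j := min_le_right _ _
    have hδ : 0 < δ := lt_min (by linarith) (by linarith)
    have hxij : x j ≤ x i := hx (le_of_lt hij)
    have hνij : ν j < ν i := by linarith
    set t := δ / (ν i - ν j) with htdef
    have hνijne : ν i - ν j ≠ 0 := ne_of_gt (by linarith)
    have hts : t * (ν i - ν j) = δ := div_mul_cancel₀ δ hνijne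
    have ht0 : 0 < t := div_pos hδ (by linarith)
    have ht1 : t ≤ 1 := by
      rw [div_le_one (by linarith)]
      linarith
    have hij' : i ≠ j := ne_of_lt hij
    set ν' := Function.update (Function.update ν i (ν i - δ)) j (ν j + δ) with hν'def
    have hv'j : ν' j = ν j + δ := Function.update_self _ _ _
    have hv'i : ν' i = ν i - δ := by
      rw [hν'def, Function.update_of_ne hij', Function.update_self]
    have hv'o : ∀ l, l ≠ i → l ≠ j → ν' l = ν l := by
      intro l h1 h2
      rw [hν'def, Function.update_of_ne h2, Function.update_of_ne h1]
    -- ν' is a convex combination of ν and its transposition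
    have hcombo : ν' = fun l => (1 - t) * ν l + t * ν (Equiv.swap i j l) := by
      funext l
      rcases eq_or_ne l i with rfl | hli
      · rw [hv'i, Equiv.swap_apply_left]
        linear_combination hts
      rcases eq_or_ne l j with rfl | hlj
      · rw [hv'j, Equiv.swap_apply_right]
        linear_combination -hts
      · rw [hv'o l hli hlj, Equiv.swap_apply_of_ne_of_ne hli hlj]
        ring
    have horb' : orbit ν' ⊆ convexHull ℝ (orbit ν) := by
      rintro y ⟨σ, rfl⟩
      have h1 : (fun l => ν (σ l)) ∈ convexHull ℝ (orbit ν) :=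
        subset_convexHull ℝ _ ⟨σ, rfl⟩
      have h2 : (fun l => ν ((σ.trans (Equiv.swap i j)) l)) ∈ convexHull ℝ (orbit ν) :=
        subset_convexHull ℝ _ ⟨σ.trans (Equiv.swap i j), rfl⟩
      have h3 := (convex_convexHull ℝ (orbit ν)) h1 h2 (by linarith : (0:ℝ) ≤ 1 - t)
        (le_of_lt ht0) (by ring)
      convert h3 using 1
      funext l
      rw [hcombo]
      simp [Equiv.trans_apply]
    have hsub : convexHull ℝ (orbit ν') ⊆ convexHull ℝ (orbit ν) :=
      convexHull_min horb' (convex_convexHull ℝ _)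
    -- ν' is antitone
    have hν' : Antitone ν' := by
      intro a b hab
      by_cases hbi : b = i
      · subst hbi
        by_cases hai : a = b
        · rw [hai]
        · have hab' : a < b := lt_of_le_of_ne hab hai
          have haj : a ≠ j := ne_of_lt (lt_trans hab' hij)
          rw [hv'i, hv'o a (ne_of_lt hab') haj]
          have := hν (le_of_lt hab')
          linarith
      by_cases hbj : b = j
      · subst hbj
        by_cases hai : a = i
        · rw [hai, hv'i, hv'j]; linarith
        by_cases haj : a = b
        · rw [haj]
        · have hab' : a < b := lt_of_le_of_ne hab haj
          rw [hv'j, hv'o a hai haj]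
          rcases lt_or_ge a i with hcase | hcase
          · have := hν (le_of_lt hcase)
            linarith
          · have hia : i < a := lt_of_le_of_ne hcase (Ne.symm hai)
            have h2 := hmid a hia hab'
            have h3 := hx (le_of_lt hab')
            linarith
      · rw [hv'o b hbi hbj]
        by_cases hai : a = i
        · have hib : i < b := lt_of_le_of_ne (hai ▸ hab) (fun hc2 => hbi hc2.symm)
          rw [hai, hv'i]
          rcases lt_or_ge b j with hcase | hcase
          · have h2 := hmid b hib hcase
            have h3 := hx (le_of_lt hib)
            linarith
          · have h2 := hν hcase
            linarith
        by_cases haj : a = j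
        · have hjb : j < b := lt_of_le_of_ne (haj ▸ hab) (fun hc2 => hbj hc2.symm)
          rw [haj, hv'j]
          have := hν (le_of_lt hjb)
          linarith
        · rw [hv'o a hai haj]
          exact hν hab
    -- sums over finsets
    have hTij : ∀ T : Finset (Fin m), i ∈ T → j ∉ T →
        ∑ l ∈ T, ν' l = (∑ l ∈ T, ν l) - δ := by
      intro T hiT hjT
      rw [← Finset.add_sum_erase _ ν' hiT, ← Finset.add_sum_erase _ ν hiT, hv'i]
      have heq : ∑ l ∈ T.erase i, ν' l = ∑ l ∈ T.erase i, ν l :=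
        Finset.sum_congr rfl (fun l hl => hv'o l (ne_of_mem_erase hl)
          (fun hc => hjT (hc ▸ mem_of_mem_erase hl)))
      rw [heq]; ring
    have hTboth : ∀ T : Finset (Fin m), i ∈ T → j ∈ T →
        ∑ l ∈ T, ν' l = ∑ l ∈ T, ν l := by
      intro T hiT hjT
      rw [← Finset.add_sum_erase _ ν' hjT, ← Finset.add_sum_erase _ ν hjT, hv'j]
      have hiT' : i ∈ T.erase j := mem_erase.2 ⟨hij', hiT⟩
      have hjT' : j ∉ T.erase j := notMem_erase _ _
      rw [hTij _ hiT' hjT']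
      ring
    have hTnone : ∀ T : Finset (Fin m), i ∉ T → j ∉ T →
        ∑ l ∈ T, ν' l = ∑ l ∈ T, ν l := by
      intro T hiT hjT
      exact Finset.sum_congr rfl (fun l hl => hv'o l
        (fun hc => hiT (hc ▸ hl)) (fun hc => hjT (hc ▸ hl)))
    -- majorization for ν'
    have hmaj' : ∀ s : ℕ, ∑ l ∈ univ.filter (fun l : Fin m => l.1 < s), x l ≤
        ∑ l ∈ univ.filter (fun l : Fin m => l.1 < s), ν' l := by
      intro s
      set T := univ.filter (fun l : Fin m => l.1 < s) with hT
      rcases le_or_gt s i.1 with hsi | his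
      · have := hmaj s
        rw [hTnone T (by simp [hT]; omega) (by
          simp only [hT, mem_filter, mem_univ, true_and]
          have := Fin.lt_def.1 hij
          omega)]
        exact this
      rcases le_or_gt s j.1 with hsj | hjs
      · have hiT : i ∈ T := by simp [hT]; omega
        have hjT : j ∉ T := by simp [hT]; omega
        rw [hTij T hiT hjT]
        -- need δ ≤ ∑_{T} (ν - x)
        have hgap : δ ≤ ∑ l ∈ T, (ν l - x l) := by
          rw [← Finset.add_sum_erase _ _ hiT]
          have hnn : 0 ≤ ∑ l ∈ T.erase i, (ν l - x l) := by
            refine Finset.sum_nonneg (fun l hl => ?_)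
            have hlT := mem_of_mem_erase hl
            have hls : l.1 < s := by
              have := (mem_filter.1 hlT).2
              exact this
            have hlj : l < j := Fin.lt_def.2 (by omega)
            have := hlle l hlj
            linarith
          linarith
        have hsd : ∑ l ∈ T, (ν l - x l) = (∑ l ∈ T, ν l) - ∑ l ∈ T, x l := by
          rw [Finset.sum_sub_distrib]
        linarith [hmaj s]
      · have hiT : i ∈ T := by
          simp only [hT, mem_filter, mem_univ, true_and]
          have := Fin.lt_def.1 hij
          omega
        have hjT : j ∈ T := by simp [hT]; omega
        rw [hTboth T hiT hjT]
        exact hmaj s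
    -- total sums equal
    have hsum' : ∑ l, x l = ∑ l, ν' l := by
      rw [hsum]
      exact (hTboth univ (mem_univ i) (mem_univ j)).symm
    -- cardinality decreases
    have hcard' : ((univ : Finset (Fin m)).filter fun l => ν' l ≠ x l).card ≤ d := by
      set D := (univ : Finset (Fin m)).filter fun l => ν l ≠ x l with hDdef
      rcases le_or_gt (ν i - x i) (x j - ν j) with hc | hc
      · have hδeq : δ = ν i - x i := min_eq_left hc
        have hfix : ν' i = x i := by rw [hv'i, hδeq]; ring
        have hsubD : ((univ : Finset (Fin m)).filter fun l => ν' l ≠ x l) ⊆ D.erase i := by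
          intro l hl
          have hlne := (mem_filter.1 hl).2
          have hli : l ≠ i := fun hc2 => hlne (hc2 ▸ hfix)
          refine mem_erase.2 ⟨hli, mem_filter.2 ⟨mem_univ l, ?_⟩⟩
          rcases eq_or_ne l j with rfl | hlj
          · exact ne_of_lt hj
          · rw [← hv'o l hli hlj]; exact hlne
        have hiD : i ∈ D := mem_filter.2 ⟨mem_univ i, ne_of_gt hi⟩
        have h1 := card_le_card hsubD
        have h2 : (D.erase i).card = D.card - 1 := card_erase_of_mem hiD
        have h3 : D.card ≤ d + 1 := hcard
        have h4 : 0 < D.card := card_pos.2 ⟨i, hiD⟩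
        omega
      · have hδeq : δ = x j - ν j := min_eq_right (le_of_lt hc)
        have hfix : ν' j = x j := by rw [hv'j, hδeq]; ring
        have hsubD : ((univ : Finset (Fin m)).filter fun l => ν' l ≠ x l) ⊆ D.erase j := by
          intro l hl
          have hlne := (mem_filter.1 hl).2
          have hlj : l ≠ j := fun hc2 => hlne (hc2 ▸ hfix)
          refine mem_erase.2 ⟨hlj, mem_filter.2 ⟨mem_univ l, ?_⟩⟩
          rcases eq_or_ne l i with rfl | hli
          · exact ne_of_gt hi
          · rw [← hv'o l hli hlj]; exact hlne
        have hjD : j ∈ D := mem_filter.2 ⟨mem_univ j, ne_of_lt hj⟩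
        have h1 := card_le_card hsubD
        have h2 : (D.erase j).card = D.card - 1 := card_erase_of_mem hjD
        have h3 : D.card ≤ d + 1 := hcard
        have h4 : 0 < D.card := card_pos.2 ⟨j, hjD⟩
        omega
    exact hsub (ih ν' hcard' hν' hmaj' hsum')
def ps (f : Fin m → ℕ) (s : ℕ) : ℕ := ∑ i ∈ univ.filter (fun i : Fin m => i.1 < s), f i

lemma ps_mono_s (f : Fin m → ℕ) {s t : ℕ} (h : s ≤ t) : ps f s ≤ ps f t :=
  Finset.sum_le_sum_of_subset (fun i hi =>
    mem_filter.2 ⟨mem_univ _, lt_of_lt_of_le (mem_filter.1 hi).2 h⟩)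

lemma strictMono_le_val {c : ℕ} (f : Fin c → Fin m) (hf : StrictMono f) :
    ∀ (n : ℕ) (a : Fin c), a.1 = n → n ≤ (f a).1 := by
  intro n
  induction n with
  | zero => intro a _; exact Nat.zero_le _
  | succ n ih =>
    intro a ha
    have hn : n < c := by omega
    have hb : (⟨n, hn⟩ : Fin c) < a := by rw [Fin.lt_def]; simp; omega
    have h1 := hf hb
    rw [Fin.lt_def] at h1
    have h2 := ih ⟨n, hn⟩ rfl
    omega

lemma ps_eq_sum_fin (ν : Fin m → ℕ) {c : ℕ} (hc : c ≤ m) :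
    ps ν c = ∑ a : Fin c, ν ⟨a.1, lt_of_lt_of_le a.2 hc⟩ := by
  rw [ps]
  refine Finset.sum_bij
    (fun (a : Fin m) (ha : a ∈ univ.filter (fun i : Fin m => i.1 < c)) =>
      (⟨a.1, (mem_filter.1 ha).2⟩ : Fin c)) ?_ ?_ ?_ ?_
  · intro a ha; exact mem_univ _
  · intro a ha b hb hab
    exact Fin.ext (by simpa using congrArg Fin.val hab)
  · intro b _
    refine ⟨⟨b.1, lt_of_lt_of_le b.2 hc⟩, mem_filter.2 ⟨mem_univ _, b.2⟩, rfl⟩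
  · intro a ha; rfl

lemma sum_le_ps (ν : Fin m → ℕ) (hν : IsPartition m ν) (T : Finset (Fin m)) :
    ∑ i ∈ T, ν i ≤ ps ν T.card := by
  classical
  have hc : T.card ≤ m := by simpa using card_le_univ T
  set c := T.card with hcdef
  let e : Fin c ≃o {x // x ∈ T} := T.orderIsoOfFin hcdef.symm
  have h1 : ∑ i ∈ T, ν i = ∑ a : Fin c, ν (e a) := by
    rw [← Finset.sum_coe_sort T ν]
    exact (Fintype.sum_equiv e.toEquiv (fun a => ν (e a)) (fun i => ν i) (fun a => rfl)).symm
  have hsm : StrictMono (fun a : Fin c => (e a : Fin m)) := by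
    intro a b hab
    exact Subtype.coe_lt_coe.2 (e.strictMono hab)
  have h2 : ∀ a : Fin c, ν (e a) ≤ ν ⟨a.1, lt_of_lt_of_le a.2 hc⟩ := by
    intro a
    refine hν ⟨a.1, lt_of_lt_of_le a.2 hc⟩ (e a) ?_
    rw [Fin.le_def]
    exact strictMono_le_val _ hsm a.1 a rfl
  rw [h1, ps_eq_sum_fin ν hc]
  exact Finset.sum_le_sum (fun a _ => h2 a)

lemma rado (ν : Fin m → ℕ) (hν : IsPartition m ν) (x : Fin m → ℝ)
    (hsum : ∑ i, x i = ((∑ i, ν i : ℕ) : ℝ))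
    (hmaj : ∀ S : Finset (Fin m), ∑ i ∈ S, x i ≤ (ps ν S.card : ℝ)) :
    x ∈ convexHull ℝ (orbit (fun i => (ν i : ℝ))) := by
  classical
  set π : Equiv.Perm (Fin m) := (Fin.revPerm).trans (Tuple.sort x) with hπ
  set x' : Fin m → ℝ := fun i => x (π i) with hx'
  have hx'anti : Antitone x' := by
    intro a b hab
    have h1 : Monotone (x ∘ Tuple.sort x) := Tuple.monotone_sort x
    have h2 : Fin.rev b ≤ Fin.rev a := Fin.rev_le_rev.2 hab
    exact h1 h2
  have hνanti : Antitone (fun i => (ν i : ℝ)) := by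
    intro a b hab
    show (ν b : ℝ) ≤ (ν a : ℝ)
    exact_mod_cast hν a b hab
  have hmaj' : ∀ s : ℕ, ∑ i ∈ univ.filter (fun i : Fin m => i.1 < s), x' i ≤
      ∑ i ∈ univ.filter (fun i : Fin m => i.1 < s), (fun i => (ν i : ℝ)) i := by
    intro s
    set T := univ.filter (fun i : Fin m => i.1 < s) with hT
    have h1 : ∑ i ∈ T, x' i = ∑ i ∈ T.image π, x i := by
      rw [Finset.sum_image (fun a _ b _ hab => π.injective hab)]
    have h2 : (T.image π).card = T.card := Finset.card_image_of_injective T π.injective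
    have h3 := hmaj (T.image π)
    rw [h2] at h3
    have h4 : T.card ≤ s := by
      have h := Finset.card_le_card_of_injOn (s := T) (t := Finset.range s)
        (fun i : Fin m => i.1)
        (fun i hi => mem_range.2 ((mem_filter.1 hi).2))
        (fun a _ b _ hab => Fin.ext hab)
      simpa using h
    have h5 : ps ν T.card ≤ ps ν s := ps_mono_s ν h4
    have h6 : ∑ i ∈ T, ((ν i : ℝ)) = (ps ν s : ℝ) := by
      have : ps ν s = ∑ i ∈ T, ν i := rfl
      rw [this]
      push_cast
      rfl
    rw [h1]
    calc ∑ i ∈ T.image π, x i ≤ (ps ν T.card : ℝ) := h3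
      _ ≤ (ps ν s : ℝ) := by exact_mod_cast h5
      _ = ∑ i ∈ T, ((ν i : ℝ)) := h6.symm
  have hsum' : ∑ i, x' i = ∑ i, (fun i => (ν i : ℝ)) i := by
    have h1 : ∑ i, x' i = ∑ i, x i := Equiv.sum_comp π x
    rw [h1, hsum]
    push_cast
    rfl
  have hx'mem := rado_sorted x' hx'anti _ (fun i => (ν i : ℝ)) le_rfl hνanti hmaj' hsum'
  have hfin := mem_hull_perm π.symm _ x' hx'mem
  have : (fun i => x' (π.symm i)) = x := by
    funext i
    simp [hx']
  rwa [this] at hfin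

def Good (m h : ℕ) (lam mu : Fin m → ℕ) : Prop :=
  IsPartition m mu ∧ (∀ i, lam i ≤ mu i) ∧ ∀ i : Fin m, mu i ≤ lam i + h * i.1

lemma ps_le_ps (f g : Fin m → ℕ) (hfg : ∀ i, f i ≤ g i) (s : ℕ) : ps f s ≤ ps g s := by
  rw [ps, ps]; exact Finset.sum_le_sum fun i _ => hfg i

lemma ps_total (f : Fin m → ℕ) : ps f m = ∑ i, f i := by
  rw [ps, filter_true_of_mem (fun i _ => i.isLt)]

lemma amem_iff {h : ℕ} (hh : 1 ≤ h) (lam mu : Fin m → ℕ) :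
    AMem m h lam mu ↔ Good m h lam mu := by
  constructor
  · rintro ⟨hp, hle, ⟨f⟩⟩
    refine ⟨hp, hle, fun i => ?_⟩
    by_cases hlt : lam i < mu i
    swap
    · have := hle i; omega
    have chain : ∀ d j, lam i ≤ j → j < mu i → j - lam i ≤ d → j - lam i + 1 ≤ f.entry i j := by
      intro d
      induction d with
      | zero =>
        intro j h1 h2 h3
        have := f.one_le i j h1 h2
        omega
      | succ d ih =>
        intro j h1 h2 h3
        by_cases hj : j = lam i
        · have := f.one_le i j h1 h2; omega
        · have h4 : lam i ≤ j - 1 := by omega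
          have h6 := ih (j-1) h4 (by omega) (by omega)
          have h7 := f.row_strict i (j-1) j h4 (by omega) h2
          omega
    have h8 := chain (mu i - 1 - lam i) (mu i - 1) (by omega) (by omega) le_rfl
    have h9 := f.upper i (mu i - 1) (by omega) (by omega)
    omega
  · rintro ⟨hp, hle, hcap⟩
    refine ⟨hp, hle, ⟨⟨fun i j => h * i.1 + j + 1 - mu i, ?_, ?_, ?_, ?_⟩⟩⟩
    · intro i j h1 h2
      have := hcap i; omega
    · intro i j h1 h2
      omega
    · intro i j k h1 h2 h3
      have := hcap i; omega
    · intro i k j hik h1 h2 h3 h4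
      have hmu := hp i k (le_of_lt hik)
      have hik' : i.1 < k.1 := hik
      have hmul : h * (i.1 + 1) ≤ h * k.1 := Nat.mul_le_mul_left h hik'
      have hms : h * (i.1 + 1) = h * i.1 + h := Nat.mul_succ h i.1
      have hci := hcap i
      have hck := hcap k
      omega

lemma good_lam (m h : ℕ) (lam : Fin m → ℕ) (hlam : IsPartition m lam) : Good m h lam lam :=
  ⟨hlam, fun _ => le_rfl, fun i => Nat.le_add_right _ _⟩

open scoped Classical in
lemma domStep_spec (m h : ℕ) (lam ν : Fin m → ℕ) :
    (domStep m h lam ν = ν ∧ ∀ r, ¬ Addable m h lam ν r) ∨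
    ∃ r : Fin m, Addable m h lam ν r ∧ (∀ q : Fin m, q < r → ¬ Addable m h lam ν q) ∧
      domStep m h lam ν = Function.update ν r (ν r + 1) := by
  by_cases hne : (Finset.univ.filter (Addable m h lam ν)).Nonempty
  · right
    refine ⟨(Finset.univ.filter (Addable m h lam ν)).min' hne, ?_, ?_, ?_⟩
    · exact (mem_filter.1 (Finset.min'_mem _ hne)).2
    · intro q hq hA
      exact absurd (Finset.min'_le _ q (mem_filter.2 ⟨mem_univ q, hA⟩)) (not_le.2 hq)
    · unfold domStep
      rw [dif_pos hne]
  · left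
    constructor
    · unfold domStep
      rw [dif_neg hne]
    · intro r hA
      exact hne ⟨r, mem_filter.2 ⟨mem_univ r, hA⟩⟩

lemma good_step (m h : ℕ) (lam ν : Fin m → ℕ) (hg : Good m h lam ν) :
    Good m h lam (domStep m h lam ν) := by
  rcases domStep_spec m h lam ν with ⟨heq, _⟩ | ⟨r, hA, hmin, heq⟩
  · rw [heq]; exact hg
  rw [heq]
  obtain ⟨hp, hle, hcap⟩ := hg
  have hr1 : 1 ≤ r.1 := by
    by_contra hc
    have hz : r.1 = 0 := by omega
    have h0 := hA.1
    rw [hz, Nat.mul_zero] at h0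
    omega
  refine ⟨?_, ?_, ?_⟩
  · intro a b hab
    by_cases hbr : b = r
    · by_cases har : a = r
      · rw [har, hbr]
      · have har' : a < r := lt_of_le_of_ne (hbr ▸ hab) har
        rw [hbr, Function.update_self, Function.update_of_ne har]
        have hq1 : r.1 - 1 < m := by omega
        have h1 := hA.2 ⟨r.1 - 1, hq1⟩ (by simp; omega)
        have h2 : a ≤ (⟨r.1 - 1, hq1⟩ : Fin m) := by
          rw [Fin.le_def]
          have := Fin.lt_def.1 har'
          simp
          omega
        have h3 := hp a ⟨r.1 - 1, hq1⟩ h2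
        omega
    · rw [Function.update_of_ne hbr]
      by_cases har : a = r
      · rw [har, Function.update_self]
        have h1 := hp r b (har ▸ hab)
        omega
      · rw [Function.update_of_ne har]
        exact hp a b hab
  · intro i
    by_cases hir : i = r
    · rw [hir, Function.update_self]
      have := hle r; omega
    · rw [Function.update_of_ne hir]; exact hle i
  · intro i
    by_cases hir : i = r
    · rw [hir, Function.update_self]
      have h1 := hA.1
      have h2 := hle r
      omega
    · rw [Function.update_of_ne hir]; exact hcap i

lemma good_domSeq (m h : ℕ) (lam : Fin m → ℕ) (hlam : IsPartition m lam) (j : ℕ) :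
    Good m h lam (domSeq m h lam j) := by
  induction j with
  | zero => exact good_lam m h lam hlam
  | succ j ih => exact good_step m h lam _ ih

lemma ps_update_add (f : Fin m → ℕ) (r : Fin m) (s : ℕ) :
    ps (Function.update f r (f r + 1)) s = ps f s + (if r.1 < s then 1 else 0) := by
  rw [ps, ps]
  by_cases hr : r.1 < s
  · have hrT : r ∈ univ.filter (fun i : Fin m => i.1 < s) := mem_filter.2 ⟨mem_univ _, hr⟩
    rw [if_pos hr, ← Finset.add_sum_erase _ _ hrT, ← Finset.add_sum_erase _ f hrT,
      Function.update_self]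
    have hcongr : ∑ i ∈ (univ.filter (fun i : Fin m => i.1 < s)).erase r,
        Function.update f r (f r + 1) i
        = ∑ i ∈ (univ.filter (fun i : Fin m => i.1 < s)).erase r, f i :=
      Finset.sum_congr rfl (fun i hi => Function.update_of_ne (ne_of_mem_erase hi) _ _)
    rw [hcongr]
    omega
  · rw [if_neg hr, Nat.add_zero]
    exact Finset.sum_congr rfl (fun i hi =>
      Function.update_of_ne (fun hc => hr (by rw [← hc]; exact (mem_filter.1 hi).2)) _ _)

lemma prefix_max (m h : ℕ) (lam ν μ : Fin m → ℕ) (hg : Good m h lam ν) (hμ : Good m h lam μ)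
    (s : ℕ) (hstuck : ∀ r : Fin m, r.1 < s → ¬ Addable m h lam ν r) :
    ∀ r : Fin m, r.1 < s → μ r ≤ ν r := by
  have key : ∀ n (r : Fin m), r.1 = n → r.1 < s → μ r ≤ ν r := by
    intro n
    induction n using Nat.strong_induction_on with
    | _ n ih =>
      intro r hrn hrs
      have hna := hstuck r hrs
      rw [Addable] at hna
      push_neg at hna
      by_cases hcap : ν r - lam r < h * r.1
      · obtain ⟨q, hq1, hq2⟩ := hna hcap
        have h1 := ih q.1 (by omega) q rfl (by omega)
        have h2 := hμ.1 q r (by rw [Fin.le_def]; omega)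
        omega
      · have h1 := hg.2.1 r
        have h2 := hg.2.2 r
        have h3 := hμ.2.2 r
        omega
  intro r hrs
  exact key r.1 r rfl hrs

lemma domSeq_succ (m h : ℕ) (lam : Fin m → ℕ) (j : ℕ) :
    domSeq m h lam (j+1) = domStep m h lam (domSeq m h lam j) := rfl

lemma claimD (m h : ℕ) (lam : Fin m → ℕ) (hlam : IsPartition m lam) :
    ∀ (j : ℕ) (μ : Fin m → ℕ), Good m h lam μ → ps μ m ≤ ps lam m + j →
    ∀ s : ℕ, ps μ s ≤ ps (domSeq m h lam j) s := by
  intro j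
  induction j with
  | zero =>
    intro μ hμ hsum s
    have hpt : ∀ i, μ i = lam i := by
      by_contra hc
      push_neg at hc
      obtain ⟨i0, hi0⟩ := hc
      have hlt : ps lam m < ps μ m := by
        rw [ps, ps]
        refine Finset.sum_lt_sum (fun i _ => hμ.2.1 i)
          ⟨i0, mem_filter.2 ⟨mem_univ _, i0.isLt⟩, lt_of_le_of_ne (hμ.2.1 i0) (Ne.symm hi0)⟩
      omega
    show ps μ s ≤ ps lam s
    exact le_of_eq (by rw [ps, ps]; exact Finset.sum_congr rfl fun i _ => hpt i)
  | succ j ih =>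
    intro μ hμ hsum s
    have hgs := good_domSeq m h lam hlam j
    rcases domStep_spec m h lam (domSeq m h lam j) with ⟨heq, hstuck⟩ | ⟨r, hA, hmin, heq⟩
    · rw [domSeq_succ, heq]
      have hpt := prefix_max m h lam _ μ hgs hμ m (fun r _ => hstuck r)
      rw [ps, ps]
      exact Finset.sum_le_sum fun i _ => hpt i i.isLt
    · rw [domSeq_succ, heq, ps_update_add]
      by_cases hj : ps μ m ≤ ps lam m + j
      · have h1 := ih μ hμ hj s
        split_ifs <;> omega
      by_cases hrs : r.1 < s
      · have hne : ∃ i, lam i < μ i := by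
          by_contra hc; push_neg at hc
          have : ps μ m ≤ ps lam m := ps_le_ps _ _ hc m
          omega
        have hTTne : (univ.filter (fun i : Fin m => lam i < μ i)).Nonempty := by
          obtain ⟨i, hi⟩ := hne; exact ⟨i, mem_filter.2 ⟨mem_univ _, hi⟩⟩
        obtain ⟨r0, hr0mem', hr0max'⟩ : ∃ r0, r0 ∈ univ.filter (fun i : Fin m => lam i < μ i) ∧
            ∀ l ∈ univ.filter (fun i : Fin m => lam i < μ i), l ≤ r0 :=
          ⟨_, Finset.max'_mem _ hTTne, fun l hl => Finset.le_max' _ l hl⟩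
        have hr0mem : lam r0 < μ r0 := (mem_filter.1 hr0mem').2
        have hr0max : ∀ l : Fin m, r0 < l → μ l = lam l := by
          intro l hl
          by_contra hc
          have h1 : lam l < μ l := lt_of_le_of_ne (hμ.2.1 l) (fun hc2 => hc hc2.symm)
          exact absurd (hr0max' l (mem_filter.2 ⟨mem_univ _, h1⟩)) (not_le.2 hl)
        set μ' := Function.update μ r0 (μ r0 - 1) with hμ'
        have hμ'r0 : μ' r0 = μ r0 - 1 := Function.update_self _ _ _
        have hμ'o : ∀ i, i ≠ r0 → μ' i = μ i := fun i hi => Function.update_of_ne hi _ _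
        have hgood' : Good m h lam μ' := by
          refine ⟨?_, ?_, ?_⟩
          · intro a b hab
            by_cases hbr : b = r0
            · by_cases har : a = r0
              · rw [har, hbr]
              · rw [hbr, hμ'r0, hμ'o a har]
                have := hμ.1 a r0 (hbr ▸ hab)
                omega
            · rw [hμ'o b hbr]
              by_cases har : a = r0
              · rw [har, hμ'r0]
                have h1 : r0 ≤ b := har ▸ hab
                rcases lt_or_eq_of_le h1 with h2 | h2
                · have h3 := hr0max b h2
                  have h4 := hlam r0 b h1
                  omega
                · exact absurd h2.symm hbr
              · rw [hμ'o a har]; exact hμ.1 a b hab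
          · intro i
            by_cases hir : i = r0
            · rw [hir, hμ'r0]; omega
            · rw [hμ'o i hir]; exact hμ.2.1 i
          · intro i
            by_cases hir : i = r0
            · rw [hir, hμ'r0]
              have := hμ.2.2 r0; omega
            · rw [hμ'o i hir]; exact hμ.2.2 i
        have hμeq : μ = Function.update μ' r0 (μ' r0 + 1) := by
          funext i
          by_cases hir : i = r0
          · rw [hir, Function.update_self, hμ'r0]
            omega
          · rw [Function.update_of_ne hir, hμ'o i hir]
        have hsum' : ps μ' m ≤ ps lam m + j := by
          have hps : ps μ m = ps μ' m + 1 := by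
            conv_lhs => rw [hμeq]
            rw [ps_update_add, if_pos r0.isLt]
          omega
        have h1 := ih μ' hgood' hsum' s
        have h2 : ps μ s ≤ ps μ' s + 1 := by
          conv_lhs => rw [hμeq]
          rw [ps_update_add]
          split_ifs <;> omega
        rw [if_pos hrs]
        omega
      · rw [if_neg hrs]
        have hstuck' : ∀ q : Fin m, q.1 < s → ¬ Addable m h lam (domSeq m h lam j) q := by
          intro q hq
          exact hmin q (by rw [Fin.lt_def]; omega)
        have hpt := prefix_max m h lam _ μ hgs hμ s hstuck'
        rw [ps, ps]
        exact Finset.sum_le_sum fun i hi => hpt i (mem_filter.1 hi).2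

lemma addable_congr {h : ℕ} {lam ν ν' : Fin m → ℕ} {q : Fin m}
    (hA : Addable m h lam ν q) (h1 : ν q = ν' q)
    (h2 : ∀ p : Fin m, p.1 + 1 = q.1 → ν p = ν' p) : Addable m h lam ν' q := by
  obtain ⟨ha, hb⟩ := hA
  refine ⟨by rw [← h1]; exact ha, fun p hp => by rw [← h1, ← h2 p hp]; exact hb p hp⟩

lemma P_mono (m h : ℕ) (lam : Fin m → ℕ) (s j : ℕ) :
    ps (domSeq m h lam j) s ≤ ps (domSeq m h lam (j+1)) s := by
  rcases domStep_spec m h lam (domSeq m h lam j) with ⟨heq, _⟩ | ⟨r, _, _, heq⟩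
  · rw [domSeq_succ, heq]
  · rw [domSeq_succ, heq, ps_update_add]
    split_ifs <;> omega

lemma P_step (m h : ℕ) (lam : Fin m → ℕ) (s j : ℕ) :
    ps (domSeq m h lam (j+1)) s ≤ ps (domSeq m h lam j) s + 1 := by
  rcases domStep_spec m h lam (domSeq m h lam j) with ⟨heq, _⟩ | ⟨r, _, _, heq⟩
  · rw [domSeq_succ, heq]; omega
  · rw [domSeq_succ, heq, ps_update_add]
    split_ifs <;> omega

lemma P_flat (m h : ℕ) (lam : Fin m → ℕ) (s : ℕ) (j : ℕ)
    (hflat : ps (domSeq m h lam (j+1)) s = ps (domSeq m h lam j) s) :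
    ps (domSeq m h lam (j+2)) s = ps (domSeq m h lam (j+1)) s := by
  rcases domStep_spec m h lam (domSeq m h lam j) with ⟨heq, hstuck⟩ | ⟨r, hA, hmin, heq⟩
  · have e1 : domSeq m h lam (j+1) = domSeq m h lam j := by rw [domSeq_succ, heq]
    rcases domStep_spec m h lam (domSeq m h lam (j+1)) with ⟨heq2, _⟩ | ⟨r2, hA2, _, _⟩
    · rw [show domSeq m h lam (j+2) = domStep m h lam (domSeq m h lam (j+1)) from rfl, heq2]
    · rw [e1] at hA2
      exact absurd hA2 (hstuck r2)
  · have e1 : domSeq m h lam (j+1) =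
        Function.update (domSeq m h lam j) r (domSeq m h lam j r + 1) := by
      rw [domSeq_succ, heq]
    have hrs : ¬ r.1 < s := by
      intro hc
      rw [e1, ps_update_add, if_pos hc] at hflat
      omega
    have hagree : ∀ p : Fin m, p.1 < s → domSeq m h lam j p = domSeq m h lam (j+1) p := by
      intro p hp
      rw [e1, Function.update_of_ne (fun hc => hrs (by rw [← hc]; exact hp))]
    have hstuck' : ∀ q : Fin m, q.1 < s → ¬ Addable m h lam (domSeq m h lam (j+1)) q := by
      intro q hq hAq
      have hq1 : domSeq m h lam (j+1) q = domSeq m h lam j q := (hagree q hq).symm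
      have hq2 : ∀ p : Fin m, p.1 + 1 = q.1 → domSeq m h lam (j+1) p = domSeq m h lam j p :=
        fun p hp => (hagree p (by omega)).symm
      have hAq' := addable_congr hAq hq1 hq2
      have hqr : q < r := Fin.lt_def.2 (by omega)
      exact hmin q hqr hAq'
    rcases domStep_spec m h lam (domSeq m h lam (j+1)) with ⟨heq2, _⟩ | ⟨r2, hA2, _, heq2⟩
    · rw [show domSeq m h lam (j+2) = domStep m h lam (domSeq m h lam (j+1)) from rfl, heq2]
    · have hr2 : ¬ r2.1 < s := fun hc => hstuck' r2 hc hA2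
      rw [show domSeq m h lam (j+2) = domStep m h lam (domSeq m h lam (j+1)) from rfl, heq2,
        ps_update_add, if_neg hr2]
      omega
lemma flat_forever (f : ℕ → ℕ) (hflat : ∀ j, f (j+1) = f j → f (j+2) = f (j+1)) :
    ∀ a b, a ≤ b → f (a+1) = f a → f (b+1) = f b := by
  intro a b hab hfa
  induction b, hab using Nat.le_induction with
  | base => exact hfa
  | succ b hb ih => exact hflat b ih

lemma conc_lower (f : ℕ → ℕ) (hmono : ∀ j, f j ≤ f (j+1))
    (hflat : ∀ j, f (j+1) = f j → f (j+2) = f (j+1)) (k : ℕ)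
    (hk : f (k+1) = f k + 1) : ∀ j, j ≤ k → f j + (k - j) ≤ f k := by
  intro j hjk
  have key : ∀ a, j ≤ a → a ≤ k → f j + (a - j) ≤ f a := by
    intro a hja
    induction a, hja using Nat.le_induction with
    | base => intro _; omega
    | succ a ha ih =>
      intro hak
      have h1 := ih (by omega)
      have h2 : f (a+1) ≠ f a := by
        intro hc
        have := flat_forever f hflat a k (by omega) hc
        omega
      have h3 := hmono a
      omega
  exact key k hjk le_rfl

lemma conc_upper (f : ℕ → ℕ) (hstep : ∀ j, f (j+1) ≤ f j + 1) :
    ∀ k j, k ≤ j → f j ≤ f k + (j - k) := by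
  intro k j hkj
  induction j, hkj using Nat.le_induction with
  | base => omega
  | succ j hj ih =>
    have := hstep j
    omega

lemma flat_const (f : ℕ → ℕ) (hflat : ∀ j, f (j+1) = f j → f (j+2) = f (j+1)) (k : ℕ)
    (hfk : f (k+1) = f k) : ∀ j, k ≤ j → f j = f k := by
  intro j hkj
  induction j, hkj using Nat.le_induction with
  | base => rfl
  | succ j hj ih =>
    have h1 : f (j+1) = f j := by
      rcases Nat.eq_or_lt_of_le hj with rfl | hlt
      · exact hfk
      · exact flat_forever f hflat k j hj hfk
    omega

lemma subgrad (f : ℕ → ℕ) (hmono : ∀ j, f j ≤ f (j+1)) (hstep : ∀ j, f (j+1) ≤ f j + 1)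
    (hflat : ∀ j, f (j+1) = f j → f (j+2) = f (j+1)) (k j : ℕ) :
    (f j : ℝ) ≤ (f k : ℝ) + ((f (k+1) : ℝ) - (f k : ℝ)) * ((j : ℝ) - (k : ℝ)) := by
  have hM : Monotone f := monotone_nat_of_le_succ hmono
  rcases eq_or_ne (f (k+1)) (f k) with hc | hc
  · rw [hc]
    have hz : ((f k : ℝ) - (f k : ℝ)) = 0 := by ring
    rw [hz, zero_mul, add_zero]
    rcases le_or_gt j k with hjk | hjk
    · exact_mod_cast hM hjk
    · have := flat_const f hflat k hc j (le_of_lt hjk)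
      exact le_of_eq (by exact_mod_cast this)
  · have hc1 : f (k+1) = f k + 1 := by
      have := hstep k; have := hmono k; omega
    have hone : ((f (k+1) : ℝ) - (f k : ℝ)) = 1 := by
      rw [hc1]; push_cast; ring
    rw [hone, one_mul]
    rcases le_or_gt j k with hjk | hjk
    · have h1 := conc_lower f hmono hflat k hc1 j hjk
      have h3 : (f j : ℝ) + ((k - j : ℕ) : ℝ) ≤ (f k : ℝ) := by exact_mod_cast h1
      have h2 : ((k - j : ℕ) : ℝ) = (k : ℝ) - (j : ℝ) := by
        rw [Nat.cast_sub hjk]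
      linarith
    · have h1 := conc_upper f hstep k j (le_of_lt hjk)
      have h3 : (f j : ℝ) ≤ (f k : ℝ) + ((j - k : ℕ) : ℝ) := by exact_mod_cast h1
      have h2 : ((j - k : ℕ) : ℝ) = (j : ℝ) - (k : ℝ) := by
        rw [Nat.cast_sub (le_of_lt hjk)]
      linarith

theorem newtG_inter_hyperplane' (m h : ℕ) (hh : 1 ≤ h) (lam : Fin m → ℕ)
    (hlam : IsPartition m lam) (k : ℕ)
    (hk : ∑ i, domSeq m h lam k i = (∑ i, lam i) + k) :
    NewtG m h lam ∩ {x : Fin m → ℝ | ∑ i, x i = ((∑ i, lam i : ℕ) : ℝ) + (k : ℝ)} =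
      permPoly m (domSeq m h lam k) := by
  classical
  have hgood : Good m h lam (domSeq m h lam k) := good_domSeq m h lam hlam k
  have hνpart : IsPartition m (domSeq m h lam k) := hgood.1
  apply Set.Subset.antisymm
  · -- hard direction
    rintro x ⟨hxN, hxH⟩
    rw [Set.mem_setOf_eq] at hxH
    rw [NewtG, _root_.convexHull_eq] at hxN
    obtain ⟨ι, t, w, z, hw0, hw1, hz, hcm⟩ := hxN
    rw [Finset.centerMass_eq_of_sum_1 _ _ hw1] at hcm
    -- extract partitions and permutations
    choose μf hμA σf hσ using hz
    set μ : ι → Fin m → ℕ := fun p => if hp : p ∈ t then μf p hp else lam with hμdef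
    set σ : ι → Equiv.Perm (Fin m) := fun p => if hp : p ∈ t then σf p hp else 1 with hσdef
    have hμA' : ∀ p ∈ t, AMem m h lam (μ p) := by
      intro p hp
      simp only [hμdef, dif_pos hp]
      exact hμA p hp
    have hσ' : ∀ p ∈ t, z p = fun i => ((μ p) ((σ p) i) : ℝ) := by
      intro p hp
      simp only [hμdef, hσdef, dif_pos hp]
      exact hσ p hp
    have hμgood : ∀ p ∈ t, Good m h lam (μ p) := fun p hp => (amem_iff hh lam (μ p)).1 (hμA' p hp)
    set jdeg : ι → ℕ := fun p => (∑ i, μ p i) - (∑ i, lam i) with hjdef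
    have hjsum : ∀ p ∈ t, ∑ i, μ p i = (∑ i, lam i) + jdeg p := by
      intro p hp
      have h1 : ∑ i, lam i ≤ ∑ i, μ p i :=
        Finset.sum_le_sum (fun i _ => (hμgood p hp).2.1 i)
      simp only [hjdef]
      omega
    have hzsum : ∀ p ∈ t, ∑ i, z p i = ((∑ i, lam i : ℕ) : ℝ) + (jdeg p : ℝ) := by
      intro p hp
      rw [hσ' p hp]
      have h1 : ∑ i, ((μ p) ((σ p) i) : ℝ) = ((∑ i, (μ p) ((σ p) i) : ℕ) : ℝ) := by
        push_cast; rfl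
      rw [h1, Equiv.sum_comp (σ p) (μ p), hjsum p hp]
      push_cast; ring
    have hxc : ∀ S : Finset (Fin m), ∑ i ∈ S, x i = ∑ p ∈ t, w p * (∑ i ∈ S, z p i) := by
      intro S
      have hco : ∀ i, x i = ∑ p ∈ t, w p * z p i := by
        intro i
        rw [← hcm, Finset.sum_apply]
        exact Finset.sum_congr rfl (fun p _ => by simp)
      calc ∑ i ∈ S, x i = ∑ i ∈ S, ∑ p ∈ t, w p * z p i :=
            Finset.sum_congr rfl (fun i _ => hco i)
        _ = ∑ p ∈ t, ∑ i ∈ S, w p * z p i := Finset.sum_comm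
        _ = ∑ p ∈ t, w p * (∑ i ∈ S, z p i) :=
            Finset.sum_congr rfl (fun p _ => (Finset.mul_sum _ _ _).symm)
    -- weights identity
    have hwj : ∑ p ∈ t, w p * (jdeg p : ℝ) = (k : ℝ) := by
      have h1 := hxc univ
      rw [hxH] at h1
      have h2 : ∑ p ∈ t, w p * (∑ i, z p i) =
          ((∑ i, lam i : ℕ) : ℝ) * (∑ p ∈ t, w p) + ∑ p ∈ t, w p * (jdeg p : ℝ) := by
        rw [Finset.mul_sum, ← Finset.sum_add_distrib]
        refine Finset.sum_congr rfl (fun p hp => ?_)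
        rw [hzsum p hp]
        ring
      rw [h2, hw1, mul_one] at h1
      linarith
    -- majorization
    have hmaj : ∀ S : Finset (Fin m), ∑ i ∈ S, x i ≤ (ps (domSeq m h lam k) S.card : ℝ) := by
      intro S
      set s := S.card with hsdef
      set f : ℕ → ℕ := fun a => min (ps lam m + a) (ps (domSeq m h lam a) s) with hfdef
      have hfa : ∀ a, f a = min (ps lam m + a) (ps (domSeq m h lam a) s) := fun a => rfl
      have hfmono : ∀ a, f a ≤ f (a+1) := by
        intro a
        have h1 := P_mono m h lam s a
        rw [hfa, hfa]
        omega
      have hfstep : ∀ a, f (a+1) ≤ f a + 1 := by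
        intro a
        have h1 := P_step m h lam s a
        rw [hfa, hfa]
        omega
      have hfflat : ∀ a, f (a+1) = f a → f (a+2) = f (a+1) := by
        intro a hfl
        rw [hfa, hfa] at hfl
        have hm1 := P_mono m h lam s a
        have hPflat : ps (domSeq m h lam (a+1)) s = ps (domSeq m h lam a) s := by omega
        have hP2 := P_flat m h lam s a hPflat
        rw [hfa, hfa]
        omega
      -- bound for each generator
      have hbound : ∀ p ∈ t, ∑ i ∈ S, z p i ≤ (f (jdeg p) : ℝ) := by
        intro p hp
        rw [hσ' p hp]
        have hn1 : ∑ i ∈ S, (μ p) ((σ p) i) ≤ ps (μ p) s := by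
          have he : ∑ i ∈ S, (μ p) ((σ p) i) = ∑ i ∈ S.image (σ p), μ p i := by
            rw [Finset.sum_image (fun a _ b _ hab => (σ p).injective hab)]
          rw [he]
          have h2 := sum_le_ps (μ p) (hμgood p hp).1 (S.image (σ p))
          rwa [Finset.card_image_of_injective _ (σ p).injective] at h2
        have hn2 : ps (μ p) s ≤ ps (domSeq m h lam (jdeg p)) s := by
          refine claimD m h lam hlam (jdeg p) (μ p) (hμgood p hp) ?_ s
          rw [ps_total, ps_total, hjsum p hp]
        have hn3 : ∑ i ∈ S, (μ p) ((σ p) i) ≤ ps lam m + jdeg p := by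
          have h4 : ∑ i ∈ S, (μ p) ((σ p) i) ≤ ∑ i, (μ p) ((σ p) i) :=
            Finset.sum_le_sum_of_subset (Finset.subset_univ S)
          rw [Equiv.sum_comp (σ p) (μ p), hjsum p hp] at h4
          rw [ps_total]
          exact h4
        have hn4 : ∑ i ∈ S, (μ p) ((σ p) i) ≤ f (jdeg p) := by
          rw [hfa]
          omega
        calc ∑ i ∈ S, ((μ p) ((σ p) i) : ℝ)
            = ((∑ i ∈ S, (μ p) ((σ p) i) : ℕ) : ℝ) := by push_cast; rfl
          _ ≤ (f (jdeg p) : ℝ) := by exact_mod_cast hn4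
      have hcℝ : ∀ p ∈ t, (f (jdeg p) : ℝ) ≤ (f k : ℝ) +
          ((f (k+1) : ℝ) - (f k : ℝ)) * ((jdeg p : ℝ) - (k : ℝ)) :=
        fun p _ => subgrad f hfmono hfstep hfflat k (jdeg p)
      have hsum1 : ∑ i ∈ S, x i ≤ ∑ p ∈ t, w p * ((f k : ℝ) +
          ((f (k+1) : ℝ) - (f k : ℝ)) * ((jdeg p : ℝ) - (k : ℝ))) := by
        rw [hxc S]
        refine Finset.sum_le_sum (fun p hp => ?_)
        have h1 := hbound p hp
        have h2 := hcℝ p hp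
        have h3 := hw0 p hp
        nlinarith [mul_le_mul_of_nonneg_left (le_trans h1 h2) h3]
      have hsum2 : ∑ p ∈ t, w p * ((f k : ℝ) +
          ((f (k+1) : ℝ) - (f k : ℝ)) * ((jdeg p : ℝ) - (k : ℝ))) = (f k : ℝ) := by
        have hexp : ∀ p ∈ t, w p * ((f k : ℝ) +
            ((f (k+1) : ℝ) - (f k : ℝ)) * ((jdeg p : ℝ) - (k : ℝ)))
            = w p * ((f k : ℝ) - ((f (k+1) : ℝ) - (f k : ℝ)) * (k : ℝ))
              + ((f (k+1) : ℝ) - (f k : ℝ)) * (w p * (jdeg p : ℝ)) := by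
          intro p _
          ring
        rw [Finset.sum_congr rfl hexp, Finset.sum_add_distrib, ← Finset.sum_mul,
          ← Finset.mul_sum, hwj, hw1]
        ring
      have hfk : f k ≤ ps (domSeq m h lam k) s := by
        rw [hfa]
        exact min_le_right _ _
      calc ∑ i ∈ S, x i ≤ (f k : ℝ) := by rw [← hsum2]; exact hsum1
        _ ≤ (ps (domSeq m h lam k) s : ℝ) := by exact_mod_cast hfk
    -- apply Rado
    have hsum' : ∑ i, x i = ((∑ i, domSeq m h lam k i : ℕ) : ℝ) := by
      rw [hxH, hk]
      push_cast; ring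
    have := rado (domSeq m h lam k) hνpart x hsum' hmaj
    exact this
  · -- easy direction
    have hAν : AMem m h lam (domSeq m h lam k) := (amem_iff hh lam _).2 hgood
    rw [permPoly]
    refine convexHull_min ?_ ?_
    · rintro y ⟨σ, rfl⟩
      constructor
      · exact subset_convexHull ℝ _ ⟨domSeq m h lam k, hAν, σ, rfl⟩
      · show ∑ i, ((domSeq m h lam k) (σ i) : ℝ) = ((∑ i, lam i : ℕ) : ℝ) + (k : ℝ)
        have h1 : ∑ i, ((domSeq m h lam k) (σ i) : ℝ)
            = ((∑ i, (domSeq m h lam k) (σ i) : ℕ) : ℝ) := by push_cast; rfl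
        rw [h1, Equiv.sum_comp σ (domSeq m h lam k), hk]
        push_cast; ring
    · refine Convex.inter (convex_convexHull ℝ _) ?_
      intro p hp q hq a b ha hb hab
      rw [Set.mem_setOf_eq] at hp hq ⊢
      have hco : ∑ i, (a • p + b • q) i = a * (∑ i, p i) + b * (∑ i, q i) := by
        rw [Finset.mul_sum, Finset.mul_sum, ← Finset.sum_add_distrib]
        exact Finset.sum_congr rfl (fun i _ => by simp)
      rw [hco, hp, hq, ← add_mul, hab, one_mul]

end NGH

/-- The intersection of `Newt(G_{h,λ})` with the hyperplane `x_1 + ... + x_m = |λ| + k`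
equals the Newton polytope of the Schur polynomial `s_{λ^{(k)}}`, i.e. the
`λ^{(k)}`-permutohedron (for `k` in the range of the dominating sequence, expressed by
`|λ^{(k)}| = |λ| + k`). -/
theorem newtG_inter_hyperplane (m h : ℕ) (hh : 1 ≤ h) (lam : Fin m → ℕ)
    (hlam : IsPartition m lam) (k : ℕ)
    (hk : ∑ i, domSeq m h lam k i = (∑ i, lam i) + k) :
    NewtG m h lam ∩ {x : Fin m → ℝ | ∑ i, x i = ((∑ i, lam i : ℕ) : ℝ) + (k : ℝ)} =
      permPoly m (domSeq m h lam k) := by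
  exact NGH.newtG_inter_hyperplane' m h hh lam hlam k hk
end

section
/- For every positive integer t, the t-th dilate of the Newton polytope of G_{h,λ} equals the Newton polytope of G_{th,tλ}: t·Newt(G_{h,λ}(x)) = Newt(G_{th,tλ}(x)). -/
open scoped Pointwise

lemma amem_iff (m h : ℕ) (hh : 1 ≤ h) (lam mu : Fin m → ℕ) :
    AMem m h lam mu ↔
      IsPartition m mu ∧ (∀ i, lam i ≤ mu i) ∧ ∀ i : Fin m, mu i ≤ lam i + h * i.1 := by
  constructor
  · rintro ⟨hp, hle, ⟨f⟩⟩
    refine ⟨hp, hle, fun i => ?_⟩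
    by_cases hlt : lam i < mu i
    · have key : ∀ d : ℕ, lam i + d < mu i → d + 1 ≤ f.entry i (lam i + d) := by
        intro d
        induction d with
        | zero =>
          intro hd
          simpa using f.one_le i (lam i) le_rfl (by simpa using hd)
        | succ d ih =>
          intro hd
          have h1 : lam i + d < mu i := by omega
          have h2 := f.row_strict i (lam i + d) (lam i + (d + 1)) (by omega) (by omega) (by omega)
          have h3 := ih h1
          omega
      have h4 := key (mu i - lam i - 1) (by omega)
      have h5 := f.upper i (lam i + (mu i - lam i - 1)) (by omega) (by omega)
      omega
    · have := hle i
      omega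
  · rintro ⟨hp, hle, hub⟩
    refine ⟨hp, hle, ⟨⟨fun i j => h * i.1 + 1 + j - mu i, ?_, ?_, ?_, ?_⟩⟩⟩
    · intro i j h1 h2
      have := hub i
      beta_reduce
      omega
    · intro i j h1 h2
      beta_reduce
      omega
    · intro i j k h1 h2 h3
      have := hub i
      beta_reduce
      omega
    · intro i k j hik h1 h2 h3 h4
      have hmu : mu k ≤ mu i := hp i k hik.le
      have hik' : i.1 + 1 ≤ k.1 := hik
      have hm : h * (i.1 + 1) ≤ h * k.1 := Nat.mul_le_mul_left h hik'
      have hu1 := hub i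
      have hu2 := hub k
      rw [Nat.mul_add, Nat.mul_one] at hm
      beta_reduce
      omega

lemma sum_add_div (t : ℕ) (ht : 1 ≤ t) (d : ℕ) :
    ∑ s ∈ Finset.range t, (d + s) / t = d := by
  induction d with
  | zero =>
    refine Finset.sum_eq_zero fun s hs => ?_
    simpa using Nat.div_eq_of_lt (Finset.mem_range.mp hs)
  | succ d ih =>
    have h1 : (∑ s ∈ Finset.range (t + 1), (d + s) / t)
        = (∑ s ∈ Finset.range t, (d + s) / t) + (d + t) / t :=
      Finset.sum_range_succ (fun s => (d + s) / t) t
    have h2 : (∑ s ∈ Finset.range (t + 1), (d + s) / t)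
        = (∑ s ∈ Finset.range t, (d + (s + 1)) / t) + (d + 0) / t :=
      Finset.sum_range_succ' (fun s => (d + s) / t) t
    have h3 : (d + t) / t = d / t + 1 := Nat.add_div_right d ht
    have h4 : (∑ s ∈ Finset.range t, (d + (s + 1)) / t)
        = ∑ s ∈ Finset.range t, (d + 1 + s) / t := by
      refine Finset.sum_congr rfl fun s _ => ?_
      congr 1
      omega
    rw [h4] at h2
    simp only [Nat.add_zero] at h2
    omega

lemma decomp (m h t : ℕ) (ht : 1 ≤ t) (lam nu : Fin m → ℕ)
    (hlam : IsPartition m lam)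
    (hp : IsPartition m nu) (hle : ∀ i, t * lam i ≤ nu i)
    (hub : ∀ i : Fin m, nu i ≤ t * lam i + t * h * i.1) :
    ∃ mus : ℕ → Fin m → ℕ,
      (∀ s < t, (IsPartition m (mus s) ∧ (∀ i, lam i ≤ mus s i) ∧
        ∀ i : Fin m, mus s i ≤ lam i + h * i.1)) ∧
      ∀ i, ∑ s ∈ Finset.range t, mus s i = nu i := by
  refine ⟨fun s i => lam i + (nu i - t * lam i + s) / t, fun s hs => ⟨?_, ?_, ?_⟩, ?_⟩
  · intro i j hij
    have h1 : lam j ≤ lam i := hlam i j hij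
    have h2 : nu j ≤ nu i := hp i j hij
    have h3 : t * lam i ≤ nu i := hle i
    have h4 : t * lam j ≤ nu j := hle j
    have h5 : t * lam j + t * (lam i - lam j) = t * lam i := by
      rw [← Nat.mul_add]
      congr 1
      omega
    have h6 : (lam i - lam j) * t = t * (lam i - lam j) := Nat.mul_comm _ _
    have key : nu j - t * lam j + s ≤ (nu i - t * lam i + s) + (lam i - lam j) * t := by
      omega
    have h7 := Nat.div_le_div_right (c := t) key
    rw [Nat.add_mul_div_right _ _ (show 0 < t by omega)] at h7
    simp only []
    omega
  · intro i
    exact Nat.le_add_right _ _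
  · intro i
    have h3 := hub i
    have h4 : t * h * i.1 = t * (h * i.1) := by ring
    have h5 : (nu i - t * lam i + s) / t < h * i.1 + 1 := by
      rw [Nat.div_lt_iff_lt_mul (show 0 < t by omega)]
      have h6 : (h * i.1 + 1) * t = t * (h * i.1) + t := by ring
      omega
    simp only []
    omega
  · intro i
    have h1 : ∑ s ∈ Finset.range t, (lam i + (nu i - t * lam i + s) / t)
        = t * lam i + ∑ s ∈ Finset.range t, (nu i - t * lam i + s) / t := by
      rw [Finset.sum_add_distrib, Finset.sum_const, Finset.card_range, smul_eq_mul]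
    have h2 := sum_add_div t ht (nu i - t * lam i)
    have h3 := hle i
    beta_reduce
    omega

/-- For every positive integer `t`, the `t`-th dilate of the Newton polytope of
`G_{h,λ}` equals the Newton polytope of `G_{th,tλ}`. -/
theorem newtG_dilate (m h t : ℕ) (hh : 1 ≤ h) (ht : 1 ≤ t) (lam : Fin m → ℕ)
    (hlam : IsPartition m lam) :
    (t : ℝ) • NewtG m h lam = NewtG m (t * h) (fun i => t * lam i) := by
  have hth : 1 ≤ t * h := Nat.one_le_iff_ne_zero.mpr (by positivity)
  unfold NewtG
  rw [← convexHull_smul]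
  apply Set.Subset.antisymm
  · apply convexHull_mono
    rintro x ⟨y, ⟨mu, hmu, σ, rfl⟩, rfl⟩
    obtain ⟨hp, hle, hub⟩ := (amem_iff m h hh lam mu).mp hmu
    refine ⟨fun i => t * mu i, ?_, σ, ?_⟩
    · rw [amem_iff m (t * h) hth]
      refine ⟨fun i j hij => Nat.mul_le_mul_left t (hp i j hij),
        fun i => Nat.mul_le_mul_left t (hle i), fun i => ?_⟩
      calc t * mu i ≤ t * (lam i + h * i.1) := Nat.mul_le_mul_left t (hub i)
        _ = t * lam i + t * h * i.1 := by ring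
    · funext i
      simp only [Pi.smul_apply, smul_eq_mul]
      push_cast
      ring
  · apply convexHull_min ?_ (convex_convexHull ℝ _)
    rintro x ⟨nu, hnu, σ, rfl⟩
    obtain ⟨hp, hle, hub⟩ := (amem_iff m (t * h) hth _ nu).mp hnu
    obtain ⟨mus, hA, hsum⟩ := decomp m h t ht lam nu hlam hp hle hub
    have ht0 : (t : ℝ) ≠ 0 := Nat.cast_ne_zero.mpr (by omega)
    have hx : (fun i => (nu (σ i) : ℝ))
        = ∑ s ∈ Finset.range t,
            (t : ℝ)⁻¹ • ((t : ℝ) • (fun i => (mus s (σ i) : ℝ))) := by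
      funext i
      rw [Finset.sum_apply]
      have hterm : ∀ s ∈ Finset.range t,
          ((t : ℝ)⁻¹ • ((t : ℝ) • (fun i => (mus s (σ i) : ℝ)))) i
            = (mus s (σ i) : ℝ) := by
        intro s _
        simp only [Pi.smul_apply, smul_eq_mul]
        rw [← mul_assoc, inv_mul_cancel₀ ht0, one_mul]
      rw [Finset.sum_congr rfl hterm, ← Nat.cast_sum, hsum (σ i)]
    rw [hx]
    refine (convex_convexHull ℝ _).sum_mem (fun s _ => by positivity) ?_ (fun s hs => ?_)
    · rw [Finset.sum_const, Finset.card_range, nsmul_eq_mul]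
      field_simp
    · apply subset_convexHull
      apply Set.smul_mem_smul_set
      obtain ⟨hp', hle', hub'⟩ := hA s (Finset.mem_range.mp hs)
      exact ⟨mus s, (amem_iff m h hh lam (mus s)).mpr ⟨hp', hle', hub'⟩, σ, rfl⟩
end

section
/- The Newton polytope of every inflated symmetric Grothendieck polynomial G_{h,λ}(x_1,...,x_m) has the integer decomposition property. -/
open scoped Pointwise

/-! Every `μ ∈ A(h,λ)` is a partition with `λ ≤ μ ≤ ν`, where `ν_i = min_{j ≤ i} (λ_j + h j)`,
and for `h ≥ 1` every such partition lies in `A(h,λ)`. Hence a point `x` of the Newton polytope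
satisfies `x(T) ≤ ν_1 + ⋯ + ν_{|T|}` and `x(T) + |λ| ≤ |x| + λ_1 + ⋯ + λ_{|T|}` for every set
`T` of coordinates. Given a lattice point `p` of the `t`-th dilate, split its degree `|p|` into `t`
nearly equal parts `d_a`, and let `μ^{d_a}` be the dominance-largest partition of size `d_a`
between `λ` and `ν`; its prefix sums are `min (ν_1 + ⋯ + ν_k) (d_a - |λ| + λ_1 + ⋯ + λ_k)`.
By the two inequalities these partitions jointly majorize `p`, so the Gale–Ryser theorem splits
`p` into `t` lattice vectors each majorized by one `μ^{d_a}`, and by Rado's theorem each of them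
lies in the permutohedron of `μ^{d_a}`, hence in the Newton polytope. -/

open Finset

section PrefixSum

variable {m : ℕ} {M : Type*} [AddCommMonoid M]

def prefixSum (f : Fin m → M) (k : ℕ) : M := ∑ i : Fin m with i.val < k, f i

@[simp] lemma prefixSum_zero (f : Fin m → M) : prefixSum f 0 = 0 := by
  simp [prefixSum]

lemma prefixSum_succ (f : Fin m → M) {k : ℕ} (hk : k < m) :
    prefixSum f (k + 1) = prefixSum f k + f ⟨k, hk⟩ := by
  have : univ.filter (fun i : Fin m => i.val < k + 1) =
      insert ⟨k, hk⟩ (univ.filter fun i : Fin m => i.val < k) := by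
    ext i
    simp only [mem_filter, mem_univ, true_and, mem_insert, Fin.ext_iff]
    omega
  rw [prefixSum, this, sum_insert (by simp), add_comm, prefixSum]

lemma prefixSum_of_le (f : Fin m → M) {k : ℕ} (hk : m ≤ k) : prefixSum f k = ∑ i, f i := by
  rw [prefixSum, filter_true_of_mem fun i _ => i.2.trans_le hk]

lemma prefixSum_min_left (f : Fin m → M) (k : ℕ) : prefixSum f (min m k) = prefixSum f k := by
  rcases le_total m k with hk | hk
  · rw [min_eq_left hk, prefixSum_of_le f le_rfl, prefixSum_of_le f hk]
  · rw [min_eq_right hk]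

lemma prefixSum_add (f g : Fin m → M) (k : ℕ) :
    prefixSum (f + g) k = prefixSum f k + prefixSum g k := sum_add_distrib

@[simp, norm_cast]
lemma prefixSum_natCast {R : Type*} [AddCommMonoidWithOne R] (f : Fin m → ℕ) (k : ℕ) :
    prefixSum (fun i => (f i : R)) k = prefixSum f k := by
  simp [prefixSum]

lemma sum_le_prefixSum_card [PartialOrder M] [IsOrderedAddMonoid M] {w : Fin m → M}
    (hw : Antitone w) (T : Finset (Fin m)) : ∑ i ∈ T, w i ≤ prefixSum w #T := by
  set r : Finset (Fin m) := {i | i.val < #T}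
  have hT : #T ≤ m := (card_le_univ T).trans_eq (Fintype.card_fin m)
  have hr : #r = #T := by rw [Fin.card_filter_val_lt, min_eq_right hT]
  rcases Nat.eq_zero_or_pos #T with h0 | hpos
  · simp [card_eq_zero.mp h0]
  set c := w ⟨#T - 1, by omega⟩
  calc ∑ i ∈ T, w i ≤ ∑ i ∈ T ∩ r, w i + #(T \ r) • c := by
        rw [← sum_inter_add_sum_sdiff T r]
        gcongr
        refine sum_le_card_nsmul _ _ _ fun i hi => hw (Fin.le_def.mpr ?_)
        simp only [mem_sdiff, mem_filter, mem_univ, true_and, not_lt, r] at hi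
        exact Nat.sub_le_of_le_add (by omega)
    _ = ∑ i ∈ r ∩ T, w i + #(r \ T) • c := by rw [inter_comm, card_sdiff_comm hr.symm]
    _ ≤ prefixSum w #T := by
        rw [prefixSum, ← sum_inter_add_sum_sdiff r T]
        gcongr
        refine card_nsmul_le_sum _ _ _ fun i hi => hw (Fin.le_def.mpr ?_)
        simp only [mem_sdiff, mem_filter, mem_univ, true_and, r] at hi
        exact Nat.le_sub_one_of_lt hi.1

lemma prefixSum_add_two_add_le {f : Fin m → ℕ} (hf : Antitone f) (k : ℕ) :
    prefixSum f (k + 2) + prefixSum f k ≤ 2 * prefixSum f (k + 1) := by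
  rcases lt_or_ge (k + 1) m with hk | hk
  · rw [prefixSum_succ f hk, prefixSum_succ f (by omega)]
    have := @hf ⟨k, by omega⟩ ⟨k + 1, hk⟩ (Fin.mk_le_mk.mpr (by omega))
    omega
  · rw [prefixSum_of_le f hk, prefixSum_of_le f (by omega)]
    have : prefixSum f k ≤ ∑ i, f i := sum_le_sum_of_subset (filter_subset _ _)
    omega

end PrefixSum

section Permutohedron

variable {m : ℕ}

def permutohedron (w : Fin m → ℝ) : Set (Fin m → ℝ) :=
  convexHull ℝ {x | ∃ σ : Equiv.Perm (Fin m), x = w ∘ σ}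

lemma permPoly_eq_permutohedron (μ : Fin m → ℕ) :
    permPoly m μ = permutohedron (fun i => (μ i : ℝ)) := rfl

lemma comp_mem_permutohedron (w : Fin m → ℝ) (σ : Equiv.Perm (Fin m)) :
    w ∘ σ ∈ permutohedron w :=
  subset_convexHull ℝ _ ⟨σ, rfl⟩

lemma comp_perm_mem_permutohedron {w x : Fin m → ℝ} (hx : x ∈ permutohedron w)
    (τ : Equiv.Perm (Fin m)) : x ∘ τ ∈ permutohedron w := by
  let f : (Fin m → ℝ) →ₗ[ℝ] (Fin m → ℝ) := LinearMap.funLeft ℝ ℝ τ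
  have hx' : f x ∈ f '' permutohedron w := Set.mem_image_of_mem f hx
  rw [permutohedron, f.image_convexHull] at hx'
  refine convexHull_mono ?_ hx'
  rintro - ⟨-, ⟨σ, rfl⟩, rfl⟩
  exact ⟨τ.trans σ, rfl⟩

lemma permutohedron_subset {w w' : Fin m → ℝ} (hw' : w' ∈ permutohedron w) :
    permutohedron w' ⊆ permutohedron w :=
  convexHull_min (by rintro - ⟨σ, rfl⟩; exact comp_perm_mem_permutohedron hw' σ)
    (convex_convexHull ℝ _)

/-- The point lies on the segment from `w` to `w ∘ swap i j`. -/
lemma add_single_sub_single_mem_permutohedron {w : Fin m → ℝ} {i j : Fin m} (hij : w j < w i)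
    {δ : ℝ} (hδ₀ : 0 ≤ δ) (hδ : δ ≤ w i - w j) :
    w + Pi.single j δ - Pi.single i δ ∈ permutohedron w := by
  have hne : i ≠ j := by rintro rfl; exact lt_irrefl _ hij
  have hpos : 0 < w i - w j := sub_pos.mpr hij
  set c := δ / (w i - w j)
  have hc : c * (w i - w j) = δ := div_mul_cancel₀ δ hpos.ne'
  have hc₀ : 0 ≤ c := div_nonneg hδ₀ hpos.le
  have hc₁ : c ≤ 1 := (div_le_one hpos).mpr hδ
  have heq : w + Pi.single j δ - Pi.single i δ = (1 - c) • w + c • (w ∘ Equiv.swap i j) := by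
    funext r
    simp only [Pi.sub_apply, Pi.add_apply, Pi.smul_apply, smul_eq_mul, Function.comp_apply]
    by_cases hri : r = i
    · subst hri
      rw [Pi.single_eq_of_ne hne, Pi.single_eq_same, Equiv.swap_apply_left]
      linarith
    by_cases hrj : r = j
    · subst hrj
      rw [Pi.single_eq_of_ne hne.symm, Pi.single_eq_same, Equiv.swap_apply_right]
      linarith
    rw [Pi.single_eq_of_ne hrj, Pi.single_eq_of_ne hri, Equiv.swap_apply_of_ne_of_ne hri hrj]
    ring
  rw [heq]
  exact convex_convexHull ℝ _ (comp_mem_permutohedron w 1) (comp_mem_permutohedron w _)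
    (by linarith) hc₀ (by ring)

end Permutohedron

section Rado

variable {m : ℕ}

lemma sub_le_prefixSum_sub_prefixSum {x w : Fin m → ℝ}
    (hpre : ∀ k, prefixSum x k ≤ prefixSum w k) {i j : Fin m}
    (hbetween : ∀ r, i < r → r < j → x r = w r) {k : ℕ} (hik : i.val < k)
    (hkj : k ≤ j.val) : w i - x i ≤ prefixSum w k - prefixSum x k := by
  induction k, hik using Nat.le_induction with
  | base =>
    have := hpre i
    rw [prefixSum_succ _ i.2, prefixSum_succ _ i.2]
    linarith
  | succ k hik ih =>
    have hkm : k < m := by omega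
    rw [prefixSum_succ _ hkm, prefixSum_succ _ hkm, hbetween ⟨k, hkm⟩
      (Fin.lt_def.mpr (by simpa using hik)) (Fin.lt_def.mpr (by simpa using hkj))]
    linarith [ih (by omega)]

lemma prefixSum_single_sub_single (j i : Fin m) (δ : ℝ) (k : ℕ) :
    prefixSum (Pi.single j δ - Pi.single i δ : Fin m → ℝ) k =
      (if j.val < k then δ else 0) - (if i.val < k then δ else 0) := by
  simp [prefixSum, sum_sub_distrib, sum_pi_single']

lemma prefixSum_le_add_single_sub_single {x w : Fin m → ℝ}
    (hpre : ∀ k, prefixSum x k ≤ prefixSum w k) {i j : Fin m} (hij : i < j)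
    (hbetween : ∀ r, i < r → r < j → x r = w r) {δ : ℝ} (hδ : δ ≤ w i - x i) (k : ℕ) :
    prefixSum x k ≤ prefixSum (w + Pi.single j δ - Pi.single i δ) k := by
  rw [add_sub_assoc, prefixSum_add, prefixSum_single_sub_single]
  have hij' : i.val < j.val := hij
  by_cases hik : i.val < k
  · by_cases hjk : j.val < k
    · simp only [hik, hjk, if_true, sub_self, add_zero]; exact hpre k
    · simp only [hik, hjk, if_true, if_false]
      have := sub_le_prefixSum_sub_prefixSum hpre hbetween hik (not_lt.mp hjk)
      linarith
  · have hjk : ¬ j.val < k := fun h => hik (by omega)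
    simp only [hik, hjk, if_false, sub_self, add_zero]; exact hpre k

lemma exists_crossing {x w : Fin m → ℝ} (hpre : ∀ k, prefixSum x k ≤ prefixSum w k)
    (hsum : ∑ r, x r = ∑ r, w r) (hxw : x ≠ w) :
    ∃ i j : Fin m, i < j ∧ x i < w i ∧ w j < x j ∧ ∀ r, i < r → r < j → x r = w r := by
  have hJ : ({r | w r < x r} : Finset (Fin m)).Nonempty := by
    by_contra hJ
    refine hxw (funext fun r => ?_)
    have hle : ∀ r ∈ univ, x r ≤ w r := fun r _ => by
      by_contra h; exact hJ ⟨r, by simpa using h⟩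
    exact (sum_eq_sum_iff_of_le hle).mp hsum r (mem_univ r)
  set j := ({r | w r < x r} : Finset (Fin m)).min' hJ
  have hj : w j < x j := (mem_filter.mp (min'_mem _ hJ)).2
  have hj_min : ∀ r, w r < x r → j ≤ r := fun r hr => min'_le _ _ (by simpa using hr)
  have hI : ({r | r < j ∧ x r < w r} : Finset (Fin m)).Nonempty := by
    by_contra hI
    have heq : prefixSum x j = prefixSum w j := by
      refine sum_congr rfl fun r hr => ?_
      have hrj : r < j := Fin.lt_def.mpr (mem_filter.mp hr).2
      have h1 := mt (hj_min r) (not_le.mpr hrj)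
      have h2 : ¬ x r < w r := fun h => hI ⟨r, by simp [hrj, h]⟩
      linarith [not_lt.mp h1, not_lt.mp h2]
    have := hpre (j + 1)
    rw [prefixSum_succ _ j.2, prefixSum_succ _ j.2, heq] at this
    linarith
  set i := ({r | r < j ∧ x r < w r} : Finset (Fin m)).max' hI
  have hi : i < j ∧ x i < w i := (mem_filter.mp (max'_mem _ hI)).2
  refine ⟨i, j, hi.1, hi.2, hj, fun r hir hrj => ?_⟩
  have h1 := mt (hj_min r) (not_le.mpr hrj)
  have h2 : ¬ x r < w r := fun h => not_le.mpr hir (le_max' _ r (by simp [hrj, h]))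
  linarith [not_lt.mp h1, not_lt.mp h2]

/-- The Robin Hood step: move `min (w i - x i) (x j - w j)` from `w i` to `w j`, for the
`i < j` of `exists_crossing`. -/
lemma exists_transfer {x w : Fin m → ℝ} (hx : Antitone x)
    (hpre : ∀ k, prefixSum x k ≤ prefixSum w k) (hsum : ∑ r, x r = ∑ r, w r) (hxw : x ≠ w) :
    ∃ w' ∈ permutohedron w, (∀ k, prefixSum x k ≤ prefixSum w' k) ∧ ∑ r, x r = ∑ r, w' r ∧
      #{r | x r ≠ w' r} < #{r | x r ≠ w r} := by
  obtain ⟨i, j, hij_lt, hi, hj, hbetween⟩ := exists_crossing hpre hsum hxw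
  have hij : i ≠ j := hij_lt.ne
  set δ := min (w i - x i) (x j - w j)
  have hδ : 0 < δ := lt_min (by linarith [hi]) (by linarith)
  have hxij : x j ≤ x i := hx hij_lt.le
  set w' := w + Pi.single j δ - Pi.single i δ
  have hw'i : w' i = w i - δ := by simp [w', hij]
  have hw'j : w' j = w j + δ := by simp [w', hij.symm]
  have hw'r : ∀ r, r ≠ i → r ≠ j → w' r = w r := fun r hri hrj => by simp [w', hri, hrj]
  refine ⟨w', add_single_sub_single_mem_permutohedron (by linarith [hi]) hδ.le
    (by linarith [min_le_left (w i - x i) (x j - w j), min_le_right (w i - x i) (x j - w j)]),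
    fun k => ?_, ?_, ?_⟩
  · exact prefixSum_le_add_single_sub_single hpre hij_lt hbetween (min_le_left _ _) k
  · simp [w', sum_sub_distrib, sum_add_distrib, hsum]
  · apply card_lt_card
    rw [ssubset_iff_of_subset]
    · rcases min_choice (w i - x i) (x j - w j) with h | h
      · exact ⟨i, by simp [hi.ne], by simp [hw'i, δ, h]⟩
      · exact ⟨j, by simp [hj.ne'], by simp [hw'j, δ, h]⟩
    · intro r hr
      simp only [mem_filter, mem_univ, true_and] at hr ⊢
      by_cases hri : r = i
      · subst hri; exact hi.ne
      by_cases hrj : r = j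
      · subst hrj; exact hj.ne'
      rwa [← hw'r r hri hrj]

theorem mem_permutohedron_of_antitone_of_prefixSum_le {x w : Fin m → ℝ} (hx : Antitone x)
    (hpre : ∀ k, prefixSum x k ≤ prefixSum w k) (hsum : ∑ r, x r = ∑ r, w r) :
    x ∈ permutohedron w := by
  induction hn : #{r | x r ≠ w r} using Nat.strong_induction_on generalizing w with
  | _ n ih =>
    by_cases hxw : x = w
    · subst hxw; exact comp_mem_permutohedron x 1
    obtain ⟨w', hw', hpre', hsum', hlt⟩ := exists_transfer hx hpre hsum hxw
    exact permutohedron_subset hw' (ih _ (hn ▸ hlt) hpre' hsum' rfl)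

/-- Rado's theorem. -/
theorem mem_permutohedron_of_sum_le {x w : Fin m → ℝ}
    (hx : ∀ T : Finset (Fin m), ∑ i ∈ T, x i ≤ prefixSum w #T) (hsum : ∑ i, x i = ∑ i, w i) :
    x ∈ permutohedron w := by
  set σ : Equiv.Perm (Fin m) := Fin.revPerm.trans (Tuple.sort x)
  have hanti : Antitone (x ∘ σ) := (Tuple.monotone_sort x).comp_antitone Fin.rev_anti
  have hpre : ∀ k, prefixSum (x ∘ σ) k ≤ prefixSum w k := by
    intro k
    have := hx ((univ.filter fun i : Fin m => i.val < k).map σ.toEmbedding)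
    rwa [sum_map, card_map, Fin.card_filter_val_lt, prefixSum_min_left] at this
  have hσ := comp_perm_mem_permutohedron
    (mem_permutohedron_of_antitone_of_prefixSum_le hanti hpre
      (by rw [← hsum]; exact Equiv.sum_comp σ x)) σ.symm
  simpa [Function.comp_def] using hσ

end Rado

section GaleRyser

variable {κ ι : Type*} [Fintype ι]

lemma exists_top_finset [DecidableEq ι] (c : ι → ℕ) {k : ℕ} (hk : k ≤ Fintype.card ι) :
    ∃ J : Finset ι, #J = k ∧ ∀ j ∈ J, ∀ j' ∉ J, c j' ≤ c j := by
  induction k with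
  | zero => exact ⟨∅, rfl, by simp⟩
  | succ k ih =>
    obtain ⟨J, hJ, htop⟩ := ih (by omega)
    have hne : (univ \ J).Nonempty := by
      rw [sdiff_nonempty]
      intro hsub
      have := card_le_card hsub
      simp only [card_univ] at this
      omega
    obtain ⟨j₀, hj₀, hmax⟩ := exists_max_image (univ \ J) c hne
    have hj₀J : j₀ ∉ J := (mem_sdiff.mp hj₀).2
    refine ⟨insert j₀ J, by rw [card_insert_of_notMem hj₀J, hJ], fun j hj j' hj' => ?_⟩
    rw [mem_insert, not_or] at hj'
    rcases mem_insert.mp hj with rfl | hj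
    · exact hmax j' (by simp [hj'.2])
    · exact htop j hj j' hj'.2

lemma sum_min_one_eq_card_filter_pos (c : ι → ℕ) : ∑ j, min 1 (c j) = #{j | 0 < c j} := by
  rw [card_filter]
  exact sum_congr rfl fun j _ => by split_ifs <;> omega

lemma pos_of_mem_top_finset [DecidableEq ι] {c : ι → ℕ} {J : Finset ι} {q : ℕ} (hJ : #J = q)
    (htop : ∀ j ∈ J, ∀ j' ∉ J, c j' ≤ c j) (hq : q ≤ #{j | 0 < c j}) : ∀ j ∈ J, 0 < c j := by
  intro j hj
  by_contra hcj
  have hsub : ({j | 0 < c j} : Finset ι) ⊆ J.erase j := fun j' hj' => by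
    have hj'c : 0 < c j' := (mem_filter.mp hj').2
    refine mem_erase.mpr ⟨by rintro rfl; exact hcj hj'c, ?_⟩
    by_contra hj'J
    have := htop j hj j' hj'J
    omega
  have h1 := card_le_card hsub
  have h2 := card_pos.mpr ⟨j, hj⟩
  rw [card_erase_of_mem hj] at h1
  omega

/-- The inductive step of Gale–Ryser: after the largest row `q` is placed in the `q` columns of
largest capacity `J`, the remaining rows still satisfy the Gale–Ryser inequalities for the
reduced capacities. -/
lemma sum_le_sum_min_of_top [DecidableEq ι] (p : κ → ℕ) {c : ι → ℕ} {T : Finset κ}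
    {J : Finset ι} {q : ℕ} (hJ : #J = q) (htop : ∀ j ∈ J, ∀ j' ∉ J, c j' ≤ c j)
    (hpos : ∀ j ∈ J, 0 < c j) (hpT : ∀ i ∈ T, p i ≤ q)
    (h : q + ∑ i ∈ T, p i ≤ ∑ j, min (#T + 1) (c j)) :
    ∑ i ∈ T, p i ≤ ∑ j, min #T (if j ∈ J then c j - 1 else c j) := by
  by_cases hcase : ∃ j' ∉ J, #T + 1 ≤ c j'
  · -- all of `J` and one more column can absorb a full row of length `#T`
    obtain ⟨j', hj'J, hj'⟩ := hcase
    calc ∑ i ∈ T, p i ≤ #T • q := sum_le_card_nsmul _ _ _ hpT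
      _ ≤ ∑ j ∈ insert j' J, #T := by
          rw [sum_const, card_insert_of_notMem hj'J, hJ, smul_eq_mul, smul_eq_mul]; nlinarith
      _ = ∑ j ∈ insert j' J, min #T (if j ∈ J then c j - 1 else c j) := by
          refine sum_congr rfl fun j hj => ?_
          rcases mem_insert.mp hj with rfl | hj
          · rw [if_neg hj'J]; omega
          · have := htop j hj j' hj'J; rw [if_pos hj]; omega
      _ ≤ _ := sum_le_sum_of_subset (subset_univ _)
  · push Not at hcase
    have hsplit : ∑ j, min (#T + 1) (c j) =
        ∑ j, (min #T (if j ∈ J then c j - 1 else c j) + if j ∈ J then 1 else 0) := by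
      refine sum_congr rfl fun j _ => ?_
      by_cases hj : j ∈ J
      · have := hpos j hj; rw [if_pos hj, if_pos hj]; omega
      · have := hcase j hj; rw [if_neg hj, if_neg hj]; omega
    rw [hsplit, sum_add_distrib, sum_boole, filter_mem_eq_inter, univ_inter, hJ, Nat.cast_id]
      at h
    omega

lemma exists_finset_family_of_subset [DecidableEq κ] [DecidableEq ι] (p : κ → ℕ)
    (s : Finset κ) (c : ι → ℕ) (h : ∀ T ⊆ s, ∑ i ∈ T, p i ≤ ∑ j, min #T (c j)) :
    ∃ S : ι → Finset κ, (∀ j, S j ⊆ s) ∧ (∀ j, #(S j) ≤ c j) ∧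
      ∀ i ∈ s, #{j | i ∈ S j} = p i := by
  induction s using Finset.strongInduction generalizing c with
  | H s ih =>
  rcases s.eq_empty_or_nonempty with rfl | hs
  · exact ⟨fun _ => ∅, by simp, by simp, by simp⟩
  obtain ⟨i₀, hi₀, hmax⟩ := exists_max_image s p hs
  have hq : p i₀ ≤ #{j | 0 < c j} := by
    have := h {i₀} (singleton_subset_iff.mpr hi₀)
    rwa [sum_singleton, card_singleton, sum_min_one_eq_card_filter_pos] at this
  obtain ⟨J, hJ, htop⟩ := exists_top_finset c (hq.trans (card_le_univ _))
  have hpos := pos_of_mem_top_finset hJ htop hq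
  set c' : ι → ℕ := fun j => if j ∈ J then c j - 1 else c j
  obtain ⟨S', hS's, hS'c, hS'p⟩ := ih (s.erase i₀) (erase_ssubset hi₀) c' fun T hT => by
    have hi₀T : i₀ ∉ T := fun h => by simpa using hT h
    have := h (insert i₀ T) (insert_subset hi₀ (hT.trans (erase_subset _ _)))
    rw [sum_insert hi₀T, card_insert_of_notMem hi₀T] at this
    exact sum_le_sum_min_of_top p hJ htop hpos
      (fun i hi => hmax i (mem_of_mem_erase (hT hi))) this
  have hi₀S' : ∀ j, i₀ ∉ S' j := fun j h => by simpa using hS's j h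
  refine ⟨fun j => if j ∈ J then insert i₀ (S' j) else S' j, fun j => ?_, fun j => ?_,
    fun i hi => ?_⟩
  · dsimp only
    split_ifs
    · exact insert_subset hi₀ ((hS's j).trans (erase_subset _ _))
    · exact (hS's j).trans (erase_subset _ _)
  · have hj' := hS'c j
    dsimp only
    split_ifs with hj
    · simp only [c', hj, if_true] at hj'
      rw [card_insert_of_notMem (hi₀S' j)]
      have := hpos j hj
      omega
    · simpa [c', hj] using hj'
  · by_cases hii₀ : i = i₀
    · subst hii₀
      rw [← hJ]
      congr 1
      ext j
      by_cases hj : j ∈ J <;> simp [hj, hi₀S']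
    · rw [← hS'p i (mem_erase.mpr ⟨hii₀, hi⟩)]
      congr 1
      ext j
      by_cases hj : j ∈ J <;> simp [hj, hii₀]

/-- Gale–Ryser: a `0/1`-matrix with row sums `p` and column sums at most `c`, encoded by the
supports `S j` of its columns. -/
theorem exists_finset_family [Fintype κ] [DecidableEq κ] [DecidableEq ι] (p : κ → ℕ)
    (c : ι → ℕ) (h : ∀ T : Finset κ, ∑ i ∈ T, p i ≤ ∑ j, min #T (c j)) :
    ∃ S : ι → Finset κ, (∀ j, #(S j) ≤ c j) ∧ ∀ i, #{j | i ∈ S j} = p i := by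
  obtain ⟨S, -, hSc, hSp⟩ := exists_finset_family_of_subset p univ c fun T _ => h T
  exact ⟨S, hSc, fun i => hSp i (mem_univ i)⟩

lemma sum_card_filter_mem_le [DecidableEq κ] {S : ι → Finset κ} {c : ι → ℕ}
    (hS : ∀ j, #(S j) ≤ c j) (T : Finset κ) : ∑ i ∈ T, #{j | i ∈ S j} ≤ ∑ j, min #T (c j) := by
  calc ∑ i ∈ T, #{j | i ∈ S j} = ∑ j, #(T ∩ S j) := by
        simp only [card_eq_sum_ones, sum_filter]
        rw [sum_comm]
        simp
    _ ≤ ∑ j, min #T (c j) := sum_le_sum fun j _ =>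
        le_min (card_le_card inter_subset_left) ((card_le_card inter_subset_right).trans (hS j))

end GaleRyser

section Conjugate

variable {m : ℕ}

lemma filter_eq_filter_val_lt_card {p : Fin m → Prop} [DecidablePred p]
    (hp : ∀ i i', i ≤ i' → p i' → p i) :
    ({i | p i} : Finset (Fin m)) = ({i | i.val < #{i | p i}} : Finset (Fin m)) := by
  refine eq_of_subset_of_card_le (fun i hi => ?_) ?_
  · have hsub : Iic i ⊆ ({i | p i} : Finset (Fin m)) :=
      fun i' hi' => mem_filter.mpr ⟨mem_univ _, hp i' i (mem_Iic.mp hi') (mem_filter.mp hi).2⟩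
    have := card_le_card hsub
    rw [Fin.card_Iic] at this
    simpa using this
  · rw [Fin.card_filter_val_lt]; exact min_le_right _ _

/-- Counting the cells of the Young diagram of `g` column by column: the `j`-th column has
`#{i | j < g i}` cells. -/
lemma sum_min_card_filter_lt {g : Fin m → ℕ} (hg : Antitone g) {B : ℕ} (hB : ∀ i, g i ≤ B)
    (k : ℕ) : ∑ j : Fin B, min k #{i | j.val < g i} = prefixSum g k := by
  have hcol : ∀ j : Fin B,
      min k #{i | j.val < g i} = #{i : Fin m | i.val < k ∧ j.val < g i} := by
    intro j
    have hS := filter_eq_filter_val_lt_card (p := fun i => j.val < g i)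
      fun i i' hii' h => h.trans_le (hg hii')
    set c := #{i | j.val < g i}
    have hc : c ≤ m := (card_le_univ _).trans_eq (Fintype.card_fin m)
    have heq : ({i | i.val < k ∧ j.val < g i} : Finset (Fin m)) =
        ({i | i.val < min k c} : Finset (Fin m)) := by
      ext i
      have hi := congrArg (i ∈ ·) hS
      simp only [mem_filter, mem_univ, true_and, eq_iff_iff] at hi ⊢
      rw [hi]; omega
    rw [heq, Fin.card_filter_val_lt]; omega
  have hrow : ∀ i : Fin m, #{j : Fin B | j.val < g i} = g i := fun i => by
    rw [Fin.card_filter_val_lt, min_eq_right (hB i)]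
  calc ∑ j : Fin B, min k #{i | j.val < g i}
      = ∑ j : Fin B, #{i : Fin m | i.val < k ∧ j.val < g i} := sum_congr rfl fun j _ => hcol j
    _ = ∑ i : Fin m with i.val < k, #{j : Fin B | j.val < g i} := by
      simp only [card_filter, sum_filter, ite_and]
      rw [sum_comm]
      refine sum_congr rfl fun i _ => ?_
      split_ifs <;> simp
    _ = prefixSum g k := sum_congr rfl fun i _ => hrow i

end Conjugate

theorem exists_sum_eq_mem_permPoly {m t : ℕ} (P : Fin m → ℕ) (μ : Fin t → Fin m → ℕ)
    (hμ : ∀ a, Antitone (μ a))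
    (hP : ∀ T : Finset (Fin m), ∑ i ∈ T, P i ≤ ∑ a, prefixSum (μ a) #T)
    (htot : ∑ a, ∑ i, μ a i ≤ ∑ i, P i) :
    ∃ v : Fin t → Fin m → ℕ, P = ∑ a, v a ∧
      ∀ a, (fun i => (v a i : ℝ)) ∈ permPoly m (μ a) := by
  set B := ∑ a, ∑ i, μ a i
  have hB : ∀ a i, μ a i ≤ B := fun a i =>
    (single_le_sum (fun i _ => Nat.zero_le _) (mem_univ i)).trans
      (single_le_sum (f := fun a => ∑ i, μ a i) (fun a _ => Nat.zero_le _) (mem_univ a))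
  have hcap : ∀ a k, ∑ j : Fin B, min k #{i | j.val < μ a i} = prefixSum (μ a) k :=
    fun a => sum_min_card_filter_lt (hμ a) (hB a)
  -- one Gale–Ryser column for each column of each of the Young diagrams `μ a`
  obtain ⟨S, hSc, hSP⟩ :=
    exists_finset_family P (fun aj : Fin t × Fin B => #{i | aj.2.val < μ aj.1 i}) fun T => by
      rw [Fintype.sum_prod_type]; simp only [hcap]; exact hP T
  set v : Fin t → Fin m → ℕ := fun a i => #{j : Fin B | i ∈ S (a, j)}
  have hPv : P = ∑ a, v a := funext fun i => by
    simp only [← hSP i, Finset.sum_apply, v, card_filter, Fintype.sum_prod_type]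
  have hvT : ∀ a T, ∑ i ∈ T, v a i ≤ prefixSum (μ a) #T := fun a T =>
    (sum_card_filter_mem_le (fun j => hSc (a, j)) T).trans_eq (hcap a _)
  have hvtot : ∀ a, ∑ i, v a i = ∑ i, μ a i := by
    have hle : ∀ a, ∑ i, v a i ≤ ∑ i, μ a i := fun a => by
      simpa [prefixSum_of_le] using hvT a univ
    refine fun a => (sum_eq_sum_iff_of_le fun a _ => hle a).mp
      (le_antisymm (sum_le_sum fun a _ => hle a) ?_) a (mem_univ a)
    calc ∑ a, ∑ i, μ a i ≤ ∑ i, P i := htot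
      _ = ∑ a, ∑ i, v a i := by rw [hPv, sum_comm]; simp [Finset.sum_apply]
  refine ⟨v, hPv, fun a => permPoly_eq_permutohedron (μ a) ▸
    mem_permutohedron_of_sum_le (fun T => ?_) ?_⟩
  · exact_mod_cast hvT a T
  · exact_mod_cast hvtot a

section Inflated

variable {m h : ℕ} {lam : Fin m → ℕ}

lemma isPartition_iff_antitone {mu : Fin m → ℕ} : IsPartition m mu ↔ Antitone mu :=
  ⟨fun h _ _ hij => h _ _ hij, fun h _ _ hij => h hij⟩

/-- The largest partition `ν` in `A(h,λ)`. -/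
def upperPartition (m h : ℕ) (lam : Fin m → ℕ) : Fin m → ℕ :=
  fun i => (Iic i).inf' nonempty_Iic fun j => lam j + h * j

lemma antitone_upperPartition : Antitone (upperPartition m h lam) :=
  fun _ _ hij => inf'_mono _ (Iic_subset_Iic.mpr hij) nonempty_Iic

lemma upperPartition_le (i : Fin m) : upperPartition m h lam i ≤ lam i + h * i :=
  inf'_le _ (mem_Iic.mpr le_rfl)

lemma le_upperPartition (hlam : Antitone lam) (i : Fin m) : lam i ≤ upperPartition m h lam i :=
  le_inf' _ _ fun _ hj => (hlam (mem_Iic.mp hj)).trans (Nat.le_add_right _ _)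

/-- Entries increase strictly along row `i` from `1`, so a row of a filling has at most
`h i` cells. -/
lemma SkewFilling.le_add_mul {mu : Fin m → ℕ} (f : SkewFilling m h lam mu) (i : Fin m) :
    mu i ≤ lam i + h * i := by
  have key : ∀ s, lam i + s < mu i → s + 1 ≤ f.entry i (lam i + s) := by
    intro s
    induction s with
    | zero => exact fun hs => f.one_le i _ le_rfl hs
    | succ s ih =>
      intro hs
      have := f.row_strict i (lam i + s) (lam i + s + 1) (by omega) (by omega) (by omega)
      have := ih (by omega)
      rw [← add_assoc]
      omega
  by_contra hlt
  have h1 := key (h * i) (by omega)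
  have h2 := f.upper i (lam i + h * i) (by omega) (by omega)
  omega

lemma AMem.le_upperPartition {mu : Fin m → ℕ} (hA : AMem m h lam mu) (i : Fin m) :
    mu i ≤ upperPartition m h lam i :=
  le_inf' _ _ fun j hj => (hA.1 j i (mem_Iic.mp hj)).trans (hA.2.2.some.le_add_mul j)

/-- Row `i` is filled with the consecutive values ending at `h i`; columns then increase
because `h ≥ 1` and `μ` is a partition. -/
lemma amem_of_le_upperPartition (hh : 1 ≤ h) {mu : Fin m → ℕ} (hmu : Antitone mu)
    (hlo : ∀ i, lam i ≤ mu i) (hup : ∀ i, mu i ≤ upperPartition m h lam i) :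
    AMem m h lam mu := by
  have hrow : ∀ i, mu i ≤ lam i + h * i := fun i => (hup i).trans (upperPartition_le i)
  refine ⟨isPartition_iff_antitone.mpr hmu, hlo,
    ⟨⟨fun i j => h * i + j + 1 - mu i, ?_, ?_, ?_, ?_⟩⟩⟩
  · intro i j hj _; have := hrow i; omega
  · intro i j _ _; omega
  · intro i j k hj hjk _; have := hrow i; omega
  · intro i k j hik _ _ _ _
    have := hrow i
    have := hmu hik.le
    have : h * i + h ≤ h * k := by
      rw [← mul_add_one]; exact Nat.mul_le_mul_left h (Fin.lt_def.mp hik)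
    omega

lemma permPoly_subset_newtG {mu : Fin m → ℕ} (hA : AMem m h lam mu) :
    permPoly m mu ⊆ NewtG m h lam :=
  convexHull_mono fun _ ⟨σ, hσ⟩ => ⟨mu, hA, σ, hσ⟩

end Inflated

section Greedy

variable {m h : ℕ} {lam : Fin m → ℕ}

/-- The prefix sums `φ_d` of the dominance-largest partition of size `d` in `A(h,λ)`: rows are
filled up to `ν` as long as the rows below can still be kept at `λ`. -/
def greedyPrefix (m h : ℕ) (lam : Fin m → ℕ) (d k : ℕ) : ℤ :=
  min ↑(prefixSum (upperPartition m h lam) k) (↑d - ↑(∑ i, lam i) + ↑(prefixSum lam k))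

def greedyPartition (m h : ℕ) (lam : Fin m → ℕ) (d : ℕ) : Fin m → ℕ :=
  fun i => (greedyPrefix m h lam d (i + 1) - greedyPrefix m h lam d i).toNat

variable {d : ℕ}

lemma greedyPrefix_succ_sub_mem (hlam : Antitone lam) (i : Fin m) :
    (lam i : ℤ) ≤ greedyPrefix m h lam d (i + 1) - greedyPrefix m h lam d i ∧
      greedyPrefix m h lam d (i + 1) - greedyPrefix m h lam d i ≤ upperPartition m h lam i := by
  have := le_upperPartition (h := h) hlam i
  simp only [greedyPrefix, prefixSum_succ _ i.2, Fin.eta]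
  push_cast
  omega

lemma greedyPartition_natCast (hlam : Antitone lam) (i : Fin m) :
    (greedyPartition m h lam d i : ℤ) =
      greedyPrefix m h lam d (i + 1) - greedyPrefix m h lam d i :=
  Int.toNat_of_nonneg ((Nat.cast_nonneg _).trans (greedyPrefix_succ_sub_mem hlam i).1)

lemma le_greedyPartition (hlam : Antitone lam) (i : Fin m) :
    lam i ≤ greedyPartition m h lam d i := by
  have := greedyPartition_natCast (h := h) (d := d) hlam i
  have := (greedyPrefix_succ_sub_mem (h := h) (d := d) hlam i).1
  omega

lemma greedyPartition_le (hlam : Antitone lam) (i : Fin m) :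
    greedyPartition m h lam d i ≤ upperPartition m h lam i := by
  have := greedyPartition_natCast (h := h) (d := d) hlam i
  have := (greedyPrefix_succ_sub_mem (h := h) (d := d) hlam i).2
  omega

/-- `φ_d` is concave, as a minimum of two concave functions. -/
lemma antitone_greedyPartition (hlam : Antitone lam) : Antitone (greedyPartition m h lam d) := by
  have hconc : Antitone fun k => greedyPrefix m h lam d (k + 1) - greedyPrefix m h lam d k := by
    refine antitone_nat_of_succ_le fun k => ?_
    have hν := prefixSum_add_two_add_le (antitone_upperPartition (h := h) (lam := lam)) k
    have hlam' := prefixSum_add_two_add_le hlam k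
    simp only [greedyPrefix, show k + 1 + 1 = k + 2 from rfl]
    zify at hν hlam'
    omega
  exact fun i j hij => Int.toNat_le_toNat (hconc (Fin.le_def.mp hij))

lemma prefixSum_greedyPartition (hlam : Antitone lam) (hd : ∑ i, lam i ≤ d) {k : ℕ}
    (hk : k ≤ m) : ↑(prefixSum (greedyPartition m h lam d) k) = greedyPrefix m h lam d k := by
  induction k with
  | zero => simp only [greedyPrefix, prefixSum_zero, Nat.cast_zero]; omega
  | succ k ih =>
    rw [prefixSum_succ _ hk, Nat.cast_add, ih (by omega), greedyPartition_natCast hlam]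
    ring

lemma sum_greedyPartition_le (hlam : Antitone lam) (hd : ∑ i, lam i ≤ d) :
    ∑ i, greedyPartition m h lam d i ≤ d := by
  have := prefixSum_greedyPartition (h := h) hlam hd le_rfl
  rw [prefixSum_of_le _ le_rfl] at this
  have hm : greedyPrefix m h lam d m ≤ d := by
    simp only [greedyPrefix, prefixSum_of_le _ le_rfl]; push_cast; omega
  omega

lemma amem_greedyPartition (hh : 1 ≤ h) (hlam : Antitone lam) :
    AMem m h lam (greedyPartition m h lam d) :=
  amem_of_le_upperPartition hh (antitone_greedyPartition hlam) (le_greedyPartition hlam)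
    (greedyPartition_le hlam)

end Greedy

lemma exists_balanced (D : ℕ) {t : ℕ} (ht : 0 < t) :
    ∃ d : Fin t → ℕ, ∑ a, d a = D ∧ ∀ a, D / t ≤ d a ∧ d a ≤ D / t + 1 := by
  refine ⟨fun a => D / t + if a.val < D % t then 1 else 0, ?_,
    fun a => by dsimp only; split_ifs <;> omega⟩
  rw [sum_add_distrib, sum_const, card_univ, Fintype.card_fin, smul_eq_mul, sum_boole,
    Fin.card_filter_val_lt, min_eq_right (Nat.mod_lt D ht).le, Nat.cast_id, Nat.div_add_mod]

lemma min_le_sum_min {t : ℕ} {d : Fin t → ℕ} {q : ℕ} (hd : ∀ a, q ≤ d a ∧ d a ≤ q + 1)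
    (A B : ℤ) : min (t * A) (∑ a, (d a : ℤ) + t * B) ≤ ∑ a, min A (d a + B) := by
  by_cases hA : A ≤ q + B
  · rw [sum_congr rfl fun a _ => min_eq_left (by have := (hd a).1; omega), sum_const, card_univ,
      Fintype.card_fin, nsmul_eq_mul]
    exact min_le_left _ _
  · rw [sum_congr rfl fun a _ => min_eq_right (by have := (hd a).2; omega), sum_add_distrib,
      sum_const, card_univ, Fintype.card_fin, nsmul_eq_mul]
    exact min_le_right _ _

theorem exists_sum_eq_mem_newtG {m h : ℕ} (hh : 1 ≤ h) {lam : Fin m → ℕ} (hlam : Antitone lam)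
    {t : ℕ} (ht : 0 < t) (P : Fin m → ℕ)
    (hV : ∀ T : Finset (Fin m), ∑ i ∈ T, P i ≤ t * prefixSum (upperPartition m h lam) #T)
    (hΛ : ∀ T : Finset (Fin m),
      ∑ i ∈ T, P i + t * ∑ i, lam i ≤ ∑ i, P i + t * prefixSum lam #T) :
    ∃ v : Fin t → Fin m → ℕ, P = ∑ a, v a ∧ ∀ a, (fun i => (v a i : ℝ)) ∈ NewtG m h lam := by
  obtain ⟨d, hdsum, hd⟩ := exists_balanced (∑ i, P i) ht
  have hlamd : ∀ a, ∑ i, lam i ≤ d a := by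
    have := hΛ ∅
    simp only [sum_empty, card_empty, prefixSum_zero, mul_zero, add_zero, zero_add] at this
    exact fun a => ((Nat.le_div_iff_mul_le ht).mpr (by linarith)).trans (hd a).1
  have hmaj : ∀ T : Finset (Fin m),
      ∑ i ∈ T, P i ≤ ∑ a, prefixSum (greedyPartition m h lam (d a)) #T := by
    intro T
    have hk : #T ≤ m := (card_le_univ T).trans_eq (Fintype.card_fin m)
    have hV' : ((∑ i ∈ T, P i : ℕ) : ℤ) ≤ t * ↑(prefixSum (upperPartition m h lam) #T) := by
      exact_mod_cast hV T
    have hΛ' : ((∑ i ∈ T, P i : ℕ) : ℤ) ≤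
        ∑ a, (d a : ℤ) + t * (↑(prefixSum lam #T) - ↑(∑ i, lam i)) := by
      have := hΛ T
      rw [← hdsum] at this
      push_cast at this ⊢
      linarith
    have := (le_min hV' hΛ').trans (min_le_sum_min hd _ _)
    zify
    simp only [Nat.cast_sum, prefixSum_greedyPartition hlam (hlamd _) hk, greedyPrefix] at this ⊢
    refine this.trans_eq (sum_congr rfl fun a _ => ?_)
    congr 1
    ring
  have htot : ∑ a, ∑ i, greedyPartition m h lam (d a) i ≤ ∑ i, P i :=
    hdsum ▸ sum_le_sum fun a _ => sum_greedyPartition_le hlam (hlamd a)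
  obtain ⟨v, hPv, hv⟩ :=
    exists_sum_eq_mem_permPoly P _ (fun a => antitone_greedyPartition hlam) hmaj htot
  exact ⟨v, hPv, fun a => permPoly_subset_newtG (amem_greedyPartition hh hlam) (hv a)⟩

lemma le_of_mem_convexHull {E : Type*} [AddCommGroup E] [Module ℝ E] {S : Set E}
    (f : E →ₗ[ℝ] ℝ) {c : ℝ} (hS : ∀ x ∈ S, f x ≤ c) {x : E} (hx : x ∈ convexHull ℝ S) :
    f x ≤ c :=
  convexHull_min (t := {x | f x ≤ c}) hS (convex_halfSpace_le f.isLinear c) hx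

section NewtonPolytope

variable {m h : ℕ} {lam : Fin m → ℕ}

lemma AMem.sum_le {mu : Fin m → ℕ} (hA : AMem m h lam mu) (S : Finset (Fin m)) :
    ∑ i ∈ S, mu i ≤ prefixSum (upperPartition m h lam) #S :=
  (sum_le_prefixSum_card (isPartition_iff_antitone.mp hA.1) S).trans
    (sum_le_sum fun i _ => hA.le_upperPartition i)

lemma AMem.sum_add_le (hlam : Antitone lam) {mu : Fin m → ℕ} (hA : AMem m h lam mu)
    (S : Finset (Fin m)) : ∑ i ∈ S, mu i + ∑ i, lam i ≤ ∑ i, mu i + prefixSum lam #S := by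
  have h1 := sum_le_prefixSum_card hlam S
  have h2 : ∑ i ∈ Sᶜ, lam i ≤ ∑ i ∈ Sᶜ, mu i := sum_le_sum fun i _ => hA.2.1 i
  rw [← sum_add_sum_compl S lam, ← sum_add_sum_compl S mu]
  omega

lemma sum_le_of_mem_newtG {y : Fin m → ℝ} (hy : y ∈ NewtG m h lam) (T : Finset (Fin m)) :
    ∑ i ∈ T, y i ≤ prefixSum (upperPartition m h lam) #T := by
  have := le_of_mem_convexHull (∑ i ∈ T, LinearMap.proj i)
    (c := ↑(prefixSum (upperPartition m h lam) #T)) ?_ hy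
  · simpa using this
  rintro x ⟨mu, hA, σ, rfl⟩
  have := hA.sum_le (T.map σ.toEmbedding)
  rw [sum_map, card_map] at this
  simp only [LinearMap.coe_sum, LinearMap.coe_proj, Finset.sum_apply, Function.eval]
  exact_mod_cast this

lemma sum_add_le_of_mem_newtG (hlam : Antitone lam) {y : Fin m → ℝ} (hy : y ∈ NewtG m h lam)
    (T : Finset (Fin m)) : ∑ i ∈ T, y i + ∑ i, (lam i : ℝ) ≤ ∑ i, y i + prefixSum lam #T := by
  have := le_of_mem_convexHull (∑ i ∈ T, LinearMap.proj i - ∑ i, LinearMap.proj i)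
    (c := ↑(prefixSum lam #T) - ∑ i, (lam i : ℝ)) ?_ hy
  · simp only [LinearMap.sub_apply, LinearMap.coe_sum, LinearMap.coe_proj, Finset.sum_apply,
      Function.eval] at this
    linarith
  rintro x ⟨mu, hA, σ, rfl⟩
  have := hA.sum_add_le hlam (T.map σ.toEmbedding)
  rw [sum_map, card_map, ← Equiv.sum_comp σ mu] at this
  simp only [LinearMap.sub_apply, LinearMap.coe_sum, LinearMap.coe_proj, Finset.sum_apply,
    Function.eval]
  have : ((∑ i ∈ T, mu (σ i) + ∑ i, lam i : ℕ) : ℝ) ≤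
      ((∑ i, mu (σ i) + prefixSum lam #T : ℕ) : ℝ) := by
    exact_mod_cast this
  push_cast at this
  linarith

lemma nonneg_of_mem_newtG {y : Fin m → ℝ} (hy : y ∈ NewtG m h lam) (i : Fin m) : 0 ≤ y i := by
  have := le_of_mem_convexHull (-LinearMap.proj i) (c := 0) ?_ hy
  · simpa using this
  rintro x ⟨mu, hA, σ, rfl⟩
  simp

end NewtonPolytope

lemma exists_natCast_eq_of_mem_smul_newtG {m h : ℕ} {lam : Fin m → ℕ} (hlam : Antitone lam)
    {t : ℕ} {p : Fin m → ℤ} (hp : (fun i => (p i : ℝ)) ∈ (t : ℝ) • NewtG m h lam) :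
    ∃ P : Fin m → ℕ, (∀ i, (P i : ℤ) = p i) ∧
      (∀ T : Finset (Fin m), ∑ i ∈ T, P i ≤ t * prefixSum (upperPartition m h lam) #T) ∧
      (∀ T : Finset (Fin m),
        ∑ i ∈ T, P i + t * ∑ i, lam i ≤ ∑ i, P i + t * prefixSum lam #T) := by
  obtain ⟨y, hy, hpy⟩ := hp
  have hpy' : ∀ i, (p i : ℝ) = t * y i := fun i => (congrFun hpy i).symm
  have hp0 : ∀ i, 0 ≤ p i := fun i => by
    have := mul_nonneg (Nat.cast_nonneg t) (nonneg_of_mem_newtG hy i)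
    rw [← hpy'] at this
    exact_mod_cast this
  have hP : ∀ i, ((p i).toNat : ℝ) = t * y i := fun i => by
    rw [← hpy']; exact_mod_cast congrArg (Int.cast : ℤ → ℝ) (Int.toNat_of_nonneg (hp0 i))
  refine ⟨fun i => (p i).toNat, fun i => Int.toNat_of_nonneg (hp0 i), fun T => ?_, fun T => ?_⟩
  · have := sum_le_of_mem_newtG hy T
    have key : ((∑ i ∈ T, (p i).toNat : ℕ) : ℝ) ≤
        ((t * prefixSum (upperPartition m h lam) #T : ℕ) : ℝ) := by
      push_cast; simp only [hP, ← mul_sum]; nlinarith [Nat.cast_nonneg (α := ℝ) t]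
    exact_mod_cast key
  · have := sum_add_le_of_mem_newtG hlam hy T
    have key : ((∑ i ∈ T, (p i).toNat + t * ∑ i, lam i : ℕ) : ℝ) ≤
        ((∑ i, (p i).toNat + t * prefixSum lam #T : ℕ) : ℝ) := by
      push_cast; simp only [hP, ← mul_sum]; nlinarith [Nat.cast_nonneg (α := ℝ) t]
    exact_mod_cast key

/-- The Newton polytope of every inflated symmetric Grothendieck polynomial `G_{h,λ}`
has the integer decomposition property: for every positive integer `t`, every lattice
point of the `t`-th dilate is a sum of `t` lattice points of the polytope. -/
theorem newtG_IDP (m h : ℕ) (hh : 1 ≤ h) (lam : Fin m → ℕ) (hlam : IsPartition m lam)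
    (t : ℕ) (ht : 1 ≤ t) (p : Fin m → ℤ)
    (hp : (fun i => (p i : ℝ)) ∈ (t : ℝ) • NewtG m h lam) :
    ∃ v : Fin t → Fin m → ℤ,
      (∀ a : Fin t, (fun i => (v a i : ℝ)) ∈ NewtG m h lam) ∧ p = ∑ a, v a := by
  rw [isPartition_iff_antitone] at hlam
  obtain ⟨P, hPp, hV, hΛ⟩ := exists_natCast_eq_of_mem_smul_newtG hlam hp
  obtain ⟨v, hPv, hv⟩ := exists_sum_eq_mem_newtG hh hlam ht P hV hΛ
  refine ⟨fun a i => v a i, fun a => by simpa using hv a, funext fun i => ?_⟩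
  rw [← hPp i, hPv]
  simp [Finset.sum_apply]
end

section
/- For m = 2 and partitions of the form λ = (λ_1, 0), the Newton polytope of the inflated symmetric Grothendieck polynomial G_{h,λ}(x_1,x_2) is reflexive if and only if λ = (3,0) and h ≥ 2. In particular, for h ≥ 3 this polytope is the triangle with vertices (3,0), (3,3), (0,3), with unique interior lattice point (2,2). -/
/-- A (possibly lower-dimensional) lattice polytope `P` is reflexive with respect to the
lattice point `p` if: `p` lies in the relative (intrinsic) interior of `P`, it is the
unique lattice point there, and `p` is at lattice distance 1 from every facet of `P`,
i.e. for every facet (an exposed face of dimension `dim P − 1`, exposed by a linear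
functional `f`) there is no lattice point of the affine span of `P` whose `f`-value lies
strictly between `f p` and the value of `f` on the facet. -/
def ReflexivePolytope (m : ℕ) (P : Set (Fin m → ℝ)) (p : Fin m → ℤ) : Prop :=
  (fun i => (p i : ℝ)) ∈ intrinsicInterior ℝ P ∧
  (∀ q : Fin m → ℤ, (fun i => (q i : ℝ)) ∈ intrinsicInterior ℝ P → q = p) ∧
  ∀ (f : (Fin m → ℝ) →ₗ[ℝ] ℝ) (F : Set (Fin m → ℝ)), F.Nonempty →
    F = {x ∈ P | ∀ y ∈ P, f y ≤ f x} →
    Module.finrank ℝ ↥(vectorSpan ℝ F) + 1 = Module.finrank ℝ ↥(vectorSpan ℝ P) →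
    ∀ x ∈ F, ∀ z : Fin m → ℤ,
      (fun i => (z i : ℝ)) ∈ affineSpan ℝ P →
      ¬(f (fun i => (p i : ℝ)) < f (fun i => (z i : ℝ)) ∧
        f (fun i => (z i : ℝ)) < f x)

/-!
For `λ = (l, 0)` nothing can be added to the first row and the second row grows by at most
`c = min h l` boxes, so the Newton polytope is the polygon `x₀, x₁ ≤ l ≤ x₀ + x₁ ≤ l + c`.
Its interior lattice points are the `z` with `z₀, z₁ < l < z₀ + z₁ < l + c`; there is exactly
one, namely `(2, 2)`, iff `l = 3` and `c ≥ 2`.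
For `l = 3` the polygon has the form `{x | ⟪w, x - p⟫ ≤ 1 for all w ∈ W}` with `W` integral and
`p = (2, 2)`. A facet of such a polygon cannot have its midpoint in the interior, so one of the
inequalities is tight along it; in the plane this forces the exposing functional to be a positive
multiple of `⟪w, ·⟫`, which takes integer values at lattice points relative to `p`.
-/

theorem add_add_smul_mem_convexHull {E : Type*} [AddCommGroup E] [Module ℝ E] {s : Set E}
    {x y z : E} (hx : x ∈ s) (hy : y ∈ s) (hz : z ∈ s) {a b c : ℝ} (ha : 0 ≤ a) (hb : 0 ≤ b)
    (hc : 0 ≤ c) (habc : a + b + c = 1) : a • x + b • y + c • z ∈ convexHull ℝ s := by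
  have := (convex_convexHull ℝ s).sum_mem (t := Finset.univ) (w := ![a, b, c]) (z := ![x, y, z])
    (by intro i _; fin_cases i <;> simpa) (by simp [Fin.sum_univ_three, habc])
    (by intro i _; fin_cases i <;> exact subset_convexHull ℝ s (by simpa))
  simpa [Fin.sum_univ_three] using this

theorem interior_setOf_le_of_isOpenMap {X : Type*} [TopologicalSpace X] {φ : X → ℝ}
    (hφo : IsOpenMap φ) (hφc : Continuous φ) (b : ℝ) :
    interior {x | φ x ≤ b} = {x | φ x < b} := by
  have h := hφo.preimage_interior_eq_interior_preimage hφc (Set.Iic b)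
  rw [interior_Iic] at h
  exact h.symm

theorem interior_setOf_ge_of_isOpenMap {X : Type*} [TopologicalSpace X] {φ : X → ℝ}
    (hφo : IsOpenMap φ) (hφc : Continuous φ) (b : ℝ) :
    interior {x | b ≤ φ x} = {x | b < φ x} := by
  have h := hφo.preimage_interior_eq_interior_preimage hφc (Set.Ici b)
  rw [interior_Ici] at h
  exact h.symm

theorem affineSpan_eq_top_of_interior_nonempty {V : Type*} [NormedAddCommGroup V]
    [NormedSpace ℝ V] {s : Set V} (hs : (interior s).Nonempty) : affineSpan ℝ s = ⊤ :=
  affineSpan_eq_top_of_nonempty_interior (hs.mono (interior_mono (subset_convexHull ℝ s)))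

theorem intrinsicInterior_eq_interior_of_interior_nonempty {V : Type*} [NormedAddCommGroup V]
    [NormedSpace ℝ V] {s : Set V} (hs : (interior s).Nonempty) :
    intrinsicInterior ℝ s = interior s := by
  have hspan := affineSpan_eq_top_of_interior_nonempty hs
  refine subset_antisymm ?_ interior_subset_intrinsicInterior
  rintro _ ⟨y, hy, rfl⟩
  have hopen : IsOpen (affineSpan ℝ s : Set V) := by simp [hspan]
  exact interior_mono (Set.image_preimage_subset _ _)
    (hopen.isOpenEmbedding_subtypeVal.isOpenMap.image_interior_subset _ ⟨y, hy, rfl⟩)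

theorem LinearMap.apply_mul_apply_comm_of_apply_eq_zero {f g : (Fin 2 → ℝ) →ₗ[ℝ] ℝ}
    {d : Fin 2 → ℝ} (hd : d ≠ 0) (hf : f d = 0) (hg : g d = 0) (u v : Fin 2 → ℝ) :
    f u * g v = f v * g u := by
  have coords : ∀ (φ : (Fin 2 → ℝ) →ₗ[ℝ] ℝ) (x : Fin 2 → ℝ),
      φ x = x 0 * φ (Pi.single 0 1) + x 1 * φ (Pi.single 1 1) := fun φ x => by
    conv_lhs => rw [pi_eq_sum_univ' x]
    simp [Fin.sum_univ_two]
  rw [coords f] at hf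
  rw [coords g] at hg
  rw [coords f u, coords f v, coords g u, coords g v]
  set a := f (Pi.single 0 1)
  set b := f (Pi.single 1 1)
  set a' := g (Pi.single 0 1)
  set b' := g (Pi.single 1 1)
  have hdet : a * b' - b * a' = 0 := by
    by_cases hd0 : d 0 = 0
    · have hd1 : d 1 ≠ 0 := fun hd1 => hd (funext (Fin.forall_fin_two.2 ⟨hd0, hd1⟩))
      refine (mul_eq_zero.1 ?_).resolve_left hd1
      linear_combination a * hg - a' * hf
    · refine (mul_eq_zero.1 ?_).resolve_left hd0
      linear_combination b' * hf - b * hg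
  linear_combination (u 0 * v 1 - u 1 * v 0) * hdet

def unitDistancePolytope (W : Finset (Fin 2 → ℤ)) (p : Fin 2 → ℤ) : Set (Fin 2 → ℝ) :=
  {x | ∀ w ∈ W, ∑ i, (w i : ℝ) * (x i - p i) ≤ 1}

theorem setOf_lt_subset_interior_unitDistancePolytope (W : Finset (Fin 2 → ℤ))
    (p : Fin 2 → ℤ) :
    {x : Fin 2 → ℝ | ∀ w ∈ W, ∑ i, (w i : ℝ) * (x i - p i) < 1} ⊆
      interior (unitDistancePolytope W p) := by
  refine interior_maximal (fun x hx w hw => (hx w hw).le) ?_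
  simp_rw [Set.ofPred_forall]
  exact isOpen_biInter_finset fun w _ => isOpen_lt (by fun_prop) continuous_const

theorem unitDistancePolytope_facet_no_lattice_between {W : Finset (Fin 2 → ℤ)}
    {p : Fin 2 → ℤ} {f : (Fin 2 → ℝ) →ₗ[ℝ] ℝ} {F : Set (Fin 2 → ℝ)}
    (hF : F = {x ∈ unitDistancePolytope W p | ∀ y ∈ unitDistancePolytope W p, f y ≤ f x})
    (hdim : Module.finrank ℝ (vectorSpan ℝ F) + 1 =
      Module.finrank ℝ (vectorSpan ℝ (unitDistancePolytope W p)))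
    {x : Fin 2 → ℝ} (hx : x ∈ F) (z : Fin 2 → ℤ) :
    ¬(f (fun i => (p i : ℝ)) < f (fun i => (z i : ℝ)) ∧ f (fun i => (z i : ℝ)) < f x) := by
  set P := unitDistancePolytope W p
  set pR : Fin 2 → ℝ := fun i => (p i : ℝ)
  set zR : Fin 2 → ℝ := fun i => (z i : ℝ)
  rintro ⟨hpz, hzx⟩
  rw [hF] at hx
  have hmaxF : ∀ y ∈ F, y ∈ P ∧ f y = f x := by
    rw [hF]
    exact fun y hy => ⟨hy.1, le_antisymm (hx.2 y hy.1) (hy.2 x hx.1)⟩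
  have hrank : Module.finrank ℝ (vectorSpan ℝ P) = 2 := by
    have hp : pR ∈ interior P := setOf_lt_subset_interior_unitDistancePolytope W p (by simp [pR])
    rw [← direction_affineSpan, affineSpan_eq_top_of_interior_nonempty ⟨pR, hp⟩,
      AffineSubspace.direction_top, finrank_top, Module.finrank_fin_fun]
  obtain ⟨y₁, hy₁, y₂, hy₂, hne⟩ : ∃ y₁ ∈ F, ∃ y₂ ∈ F, y₁ ≠ y₂ := by
    by_contra! hsub
    rw [(vectorSpan_eq_bot_iff_subsingleton ℝ).2 hsub, finrank_bot, hrank] at hdim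
    omega
  obtain ⟨hy₁P, hfy₁⟩ := hmaxF y₁ hy₁
  obtain ⟨hy₂P, hfy₂⟩ := hmaxF y₂ hy₂
  set m := (1 / 2 : ℝ) • (y₁ + y₂)
  by_cases hint : ∀ w ∈ W, ∑ i, (w i : ℝ) * (m i - p i) < 1
  · -- `f` is maximised over `P` at the interior point `m`, so `f = 0`
    have hm : m ∈ interior P := setOf_lt_subset_interior_unitDistancePolytope W p hint
    have hfm : f m = f x := by
      simp only [m, map_smul, map_add, hfy₁, hfy₂, smul_eq_mul]
      ring
    have hloc : IsLocalMax f m := Filter.mem_of_superset (mem_interior_iff_mem_nhds.1 hm)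
      fun y hy => (hx.2 y hy).trans hfm.ge
    have hf0 := hloc.hasFDerivAt_eq_zero (LinearMap.toContinuousLinearMap f).hasFDerivAt
    have : f = 0 := by simpa using congrArg ContinuousLinearMap.toLinearMap hf0
    simp [this] at hpz
  · push Not at hint
    obtain ⟨w, hw, hwm⟩ := hint
    let g : (Fin 2 → ℝ) →ₗ[ℝ] ℝ := dotProductEquiv ℝ (Fin 2) (fun i => (w i : ℝ))
    have hg : ∀ v, g v = ∑ i, (w i : ℝ) * v i := fun v => rfl
    have hy₁w := hy₁P w hw
    have hy₂w := hy₂P w hw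
    simp only [m, Fin.sum_univ_two, Pi.smul_apply, Pi.add_apply, smul_eq_mul] at hwm hy₁w hy₂w
    have hgy₁ : g (y₁ - pR) = 1 := by
      simp only [hg, Fin.sum_univ_two, Pi.sub_apply, pR]; linarith
    have hgd : g (y₁ - y₂) = 0 := by
      simp only [hg, Fin.sum_univ_two, Pi.sub_apply]; linarith
    have hdep := f.apply_mul_apply_comm_of_apply_eq_zero (sub_ne_zero.2 hne)
      (by simp [hfy₁, hfy₂]) hgd (zR - pR) (y₁ - pR)
    obtain ⟨k, hk⟩ : ∃ k : ℤ, g (zR - pR) = k :=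
      ⟨∑ i, w i * (z i - p i), by simp [hg, zR, pR]⟩
    rw [hgy₁, hk, mul_one, map_sub, map_sub] at hdep
    have hs : 0 < f y₁ - f pR := by linarith
    have hk0 : (0 : ℝ) < k := by nlinarith
    have hk1 : (k : ℝ) < 1 := by nlinarith
    have : (0 : ℤ) < k ∧ k < 1 := ⟨by exact_mod_cast hk0, by exact_mod_cast hk1⟩
    omega

theorem aMem_single_row_iff (h l : ℕ) (μ : Fin 2 → ℕ) :
    AMem 2 h (fun i => if i.1 = 0 then l else 0) μ ↔ μ 0 = l ∧ μ 1 ≤ min h l := by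
  constructor
  · rintro ⟨hpart, hle, ⟨T⟩⟩
    -- a box added to the first row would need an entry in `{1, …, h * 0} = ∅`
    have hμ0 : μ 0 = l := by
      refine le_antisymm (not_lt.1 fun hlt => ?_) (by simpa using hle 0)
      have hpos := T.one_le 0 l (by simp) hlt
      have hzero := T.upper 0 l (by simp) hlt
      simp at hzero
      omega
    have hrow : ∀ j, j < μ 1 → j + 1 ≤ T.entry 1 j := by
      intro j
      induction j with
      | zero => exact T.one_le 1 0 (by simp)
      | succ n ih =>
        intro hn
        have := T.row_strict 1 n (n + 1) (by simp) (by omega) hn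
        have := ih (by omega)
        omega
    have hμ1h : μ 1 ≤ h := by
      rcases Nat.eq_zero_or_pos (μ 1) with h0 | h0
      · omega
      · have hlast := hrow (μ 1 - 1) (by omega)
        have hbound := T.upper 1 (μ 1 - 1) (by simp) (by omega)
        simp at hbound
        omega
    exact ⟨hμ0, le_min hμ1h (hμ0 ▸ hpart 0 1 (by decide))⟩
  · rintro ⟨hμ0, hμ1⟩
    have hμ1l := hμ1.trans (min_le_right h l)
    have hμ1h := hμ1.trans (min_le_left h l)
    refine ⟨?_, ?_, ⟨⟨fun _ j => j + 1, ?_, ?_, ?_, ?_⟩⟩⟩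
    · intro i j hij
      fin_cases i <;> fin_cases j <;> simp_all
    · intro i
      fin_cases i <;> simp [hμ0]
    · intro i j _ _
      omega
    · intro i j hlj hj
      fin_cases i <;> simp at hlj hj ⊢ <;> omega
    · intro i j k _ hjk _
      omega
    · intro i k j hik hlj hj _ _
      fin_cases i <;> fin_cases k <;> simp_all
      omega

def truncatedTriangle (L C : ℝ) : Set (Fin 2 → ℝ) :=
  {x | x 0 ≤ L ∧ x 1 ≤ L ∧ L ≤ x 0 + x 1 ∧ x 0 + x 1 ≤ L + C}

theorem convex_truncatedTriangle (L C : ℝ) : Convex ℝ (truncatedTriangle L C) := by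
  rintro x ⟨hx₁, hx₂, hx₃, hx₄⟩ y ⟨hy₁, hy₂, hy₃, hy₄⟩ a b ha hb hab
  simp only [truncatedTriangle, Set.mem_ofPred_eq, Pi.add_apply, Pi.smul_apply, smul_eq_mul]
  refine ⟨?_, ?_, ?_, ?_⟩ <;> nlinarith

theorem truncatedTriangle_subset_convexHull {L C : ℝ} (hC : 0 < C) (hCL : C ≤ L)
    {s : Set (Fin 2 → ℝ)} (hA : ![L, 0] ∈ s) (hB : ![L, C] ∈ s) (hC' : ![C, L] ∈ s)
    (hD : ![0, L] ∈ s) : truncatedTriangle L C ⊆ convexHull ℝ s := by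
  have hL : 0 < L := hC.trans_le hCL
  rintro x ⟨h₁, h₂, h₃, h₄⟩
  -- split along the diagonal from `(L, 0)` to `(C, L)`, the line `L x₀ + (L - C) x₁ = L²`
  rcases le_or_gt (L * x 0 + (L - C) * x 1) (L ^ 2) with hdiag | hdiag
  · convert add_add_smul_mem_convexHull hA hC' hD (a := (L - x 1) / L) (b := (x 0 + x 1 - L) / C)
      (c := (L ^ 2 - L * x 0 - (L - C) * x 1) / (L * C)) (div_nonneg (by linarith) hL.le)
      (div_nonneg (by linarith) hC.le) (div_nonneg (by linarith) (by positivity))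
      (by field_simp; ring) using 1
    ext i; fin_cases i <;> simp <;> field_simp <;> ring
  · have hLC : 0 < L - C := by
      by_contra! hLC
      nlinarith
    convert add_add_smul_mem_convexHull hA hB hC' (a := (L + C - x 0 - x 1) / C)
      (b := (L * x 0 + (L - C) * x 1 - L ^ 2) / (C * (L - C))) (c := (L - x 0) / (L - C))
      (div_nonneg (by linarith) hC.le) (div_nonneg (by linarith) (by positivity))
      (div_nonneg (by linarith) hLC.le) (by field_simp; ring) using 1
    ext i; fin_cases i <;> simp <;> field_simp <;> ring

theorem newtG_eq_truncatedTriangle {h l : ℕ} (hh : 0 < h) (hl : 0 < l) :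
    NewtG 2 h (fun i => if i.1 = 0 then l else 0) = truncatedTriangle l (min h l : ℕ) := by
  set c := min h l with hc
  apply subset_antisymm
  · refine convexHull_min ?_ (convex_truncatedTriangle _ _)
    rintro _ ⟨μ, hμ, σ, rfl⟩
    obtain ⟨hμ0, hμ1⟩ := (aMem_single_row_iff h l μ).1 hμ
    have hle : ∀ i, μ i ≤ l := Fin.forall_fin_two.2 ⟨hμ0.le, hμ1.trans (min_le_right _ _)⟩
    have hsum : μ (σ 0) + μ (σ 1) = μ 0 + μ 1 := by
      simpa [Fin.sum_univ_two] using Equiv.sum_comp σ μ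
    have hσ0 := hle (σ 0)
    have hσ1 := hle (σ 1)
    simp only [truncatedTriangle, Set.mem_ofPred_eq]
    refine ⟨?_, ?_, ?_, ?_⟩ <;> norm_cast <;> omega
  · have mem : ∀ j ≤ c, ∀ σ : Equiv.Perm (Fin 2), (fun i => ((![l, j] (σ i) : ℕ) : ℝ)) ∈
        {x | ∃ μ, AMem 2 h (fun i => if i.1 = 0 then l else 0) μ ∧
          ∃ σ : Equiv.Perm (Fin 2), x = fun i => (μ (σ i) : ℝ)} :=
      fun j hj σ => ⟨_, (aMem_single_row_iff h l _).2 ⟨rfl, hj⟩, σ, rfl⟩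
    have hc0 : (0 : ℝ) < c := by simp [hc, hh, hl]
    have hcl : (c : ℝ) ≤ l := by exact_mod_cast min_le_right h l
    refine truncatedTriangle_subset_convexHull hc0 hcl ?_ ?_ ?_ ?_
    · convert mem 0 c.zero_le 1 using 1; ext i; fin_cases i <;> simp
    · convert mem c le_rfl 1 using 1; ext i; fin_cases i <;> simp
    · convert mem c le_rfl (Equiv.swap 0 1) using 1; ext i; fin_cases i <;> simp
    · convert mem 0 c.zero_le (Equiv.swap 0 1) using 1; ext i; fin_cases i <;> simp

theorem interior_truncatedTriangle (L C : ℝ) :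
    interior (truncatedTriangle L C) =
      {x | x 0 < L ∧ x 1 < L ∧ L < x 0 + x 1 ∧ x 0 + x 1 < L + C} := by
  have hsum : IsOpenMap (fun x : Fin 2 → ℝ => x 0 + x 1) :=
    (ContinuousLinearMap.proj (R := ℝ) (φ := fun _ : Fin 2 => ℝ) 0 +
      ContinuousLinearMap.proj 1).isOpenMap (fun t => ⟨![t, 0], by simp⟩)
  have h₁ : interior {x : Fin 2 → ℝ | x 0 ≤ L} = {x | x 0 < L} :=
    interior_setOf_le_of_isOpenMap (isOpenMap_eval 0) (continuous_apply 0) L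
  have h₂ : interior {x : Fin 2 → ℝ | x 1 ≤ L} = {x | x 1 < L} :=
    interior_setOf_le_of_isOpenMap (isOpenMap_eval 1) (continuous_apply 1) L
  have h₃ : interior {x : Fin 2 → ℝ | L ≤ x 0 + x 1} = {x | L < x 0 + x 1} :=
    interior_setOf_ge_of_isOpenMap hsum (by fun_prop) L
  have h₄ : interior {x : Fin 2 → ℝ | x 0 + x 1 ≤ L + C} = {x | x 0 + x 1 < L + C} :=
    interior_setOf_le_of_isOpenMap hsum (by fun_prop) (L + C)
  simp only [truncatedTriangle, Set.ofPred_and, interior_inter, h₁, h₂, h₃, h₄]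

theorem intrinsicInterior_truncatedTriangle {L C : ℝ} (hC : 0 < C) (hCL : C ≤ L) :
    intrinsicInterior ℝ (truncatedTriangle L C) =
      {x | x 0 < L ∧ x 1 < L ∧ L < x 0 + x 1 ∧ x 0 + x 1 < L + C} := by
  rw [intrinsicInterior_eq_interior_of_interior_nonempty, interior_truncatedTriangle]
  refine ⟨![L - C / 4, C / 2], ?_⟩
  rw [interior_truncatedTriangle]
  simp only [Set.mem_ofPred_eq, Matrix.cons_val_zero, Matrix.cons_val_one]
  refine ⟨?_, ?_, ?_, ?_⟩ <;> linarith

theorem cast_mem_intrinsicInterior_truncatedTriangle {l c : ℕ} (hc : 0 < c) (hcl : c ≤ l)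
    (z : Fin 2 → ℤ) :
    (fun i => (z i : ℝ)) ∈ intrinsicInterior ℝ (truncatedTriangle l c) ↔
      z 0 < l ∧ z 1 < l ∧ l < z 0 + z 1 ∧ z 0 + z 1 < l + c := by
  rw [intrinsicInterior_truncatedTriangle (by exact_mod_cast hc) (by exact_mod_cast hcl)]
  simp only [Set.mem_ofPred_eq]
  norm_cast

theorem truncatedTriangle_three_eq_unitDistancePolytope {c : ℕ} (hc2 : 2 ≤ c) (hc3 : c ≤ 3) :
    ∃ W, truncatedTriangle (3 : ℕ) c = unitDistancePolytope W (fun _ => 2) := by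
  interval_cases c
  · refine ⟨{![1, 0], ![0, 1], ![-1, -1], ![1, 1]}, Set.ext fun x => ?_⟩
    norm_num [truncatedTriangle, unitDistancePolytope, Fin.sum_univ_two]
    intro _ _
    constructor <;> rintro ⟨_, _⟩ <;> constructor <;> linarith
  · refine ⟨{![1, 0], ![0, 1], ![-1, -1]}, Set.ext fun x => ?_⟩
    norm_num [truncatedTriangle, unitDistancePolytope, Fin.sum_univ_two]
    intro _ _
    constructor
    · rintro ⟨_, -⟩
      linarith
    · intro
      constructor <;> linarith

theorem reflexivePolytope_truncatedTriangle_three {c : ℕ} (hc2 : 2 ≤ c) (hc3 : c ≤ 3) :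
    ReflexivePolytope 2 (truncatedTriangle (3 : ℕ) c) (fun _ => 2) := by
  have hint := cast_mem_intrinsicInterior_truncatedTriangle (l := 3) (by omega) hc3
  obtain ⟨W, hW⟩ := truncatedTriangle_three_eq_unitDistancePolytope hc2 hc3
  refine ⟨(hint _).2 (by omega), fun q hq => ?_, ?_⟩
  · have := (hint q).1 hq
    ext i; fin_cases i <;> simp <;> omega
  · rw [hW]
    exact fun f F _ hF hdim x hx z _ => unitDistancePolytope_facet_no_lattice_between hF hdim hx z

theorem eq_three_of_reflexivePolytope_truncatedTriangle {l c : ℕ} (hc : 0 < c) (hcl : c ≤ l)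
    {p : Fin 2 → ℤ} (hP : ReflexivePolytope 2 (truncatedTriangle l c) p) : l = 3 ∧ 2 ≤ c := by
  obtain ⟨hp, huniq, -⟩ := hP
  have hint := cast_mem_intrinsicInterior_truncatedTriangle hc hcl
  have := (hint p).1 hp
  refine ⟨le_antisymm (not_lt.1 fun hl => ?_) (by omega), by omega⟩
  -- `(2, l - 1)` and `(l - 1, 2)` are distinct interior lattice points once `l ≥ 4`
  have h₁ := huniq ![2, l - 1] ((hint _).2 (by simp; omega))
  have h₂ := huniq ![l - 1, 2] ((hint _).2 (by simp; omega))
  have := congrFun (h₁.trans h₂.symm) 0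
  simp at this
  omega

theorem truncatedTriangle_self_eq_convexHull {L : ℝ} (hL : 0 < L) :
    truncatedTriangle L L = convexHull ℝ {![L, 0], ![L, L], ![0, L]} := by
  refine subset_antisymm (truncatedTriangle_subset_convexHull hL le_rfl (by simp) (by simp)
    (by simp) (by simp)) (convexHull_min ?_ (convex_truncatedTriangle L L))
  rintro x (rfl | rfl | rfl) <;> simp [truncatedTriangle, hL.le]

/-- For `m = 2` and nonzero partitions λ = (λ_1, 0): the Newton polytope of the
inflated symmetric Grothendieck polynomial `G_{h,λ}(x_1,x_2)` is reflexive if and only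
if `λ = (3,0)` and `h ≥ 2`. In particular, for `h ≥ 3` this polytope is the triangle
with vertices `(3,0)`, `(3,3)`, `(0,3)`, with unique interior lattice point `(2,2)`. -/
theorem newtG_two_vars_reflexive :
    (∀ h l : ℕ, 1 ≤ h → 0 < l →
      ((∃ p : Fin 2 → ℤ,
          ReflexivePolytope 2 (NewtG 2 h (fun i => if i.1 = 0 then l else 0)) p)
        ↔ (l = 3 ∧ 2 ≤ h))) ∧
    (∀ h : ℕ, 3 ≤ h →
      NewtG 2 h (fun i => if i.1 = 0 then 3 else 0) =
        convexHull ℝ {x : Fin 2 → ℝ |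
          x = (fun i => if i.1 = 0 then (3 : ℝ) else 0) ∨
          x = (fun _ => (3 : ℝ)) ∨
          x = (fun i => if i.1 = 0 then (0 : ℝ) else 3)} ∧
      ∀ z : Fin 2 → ℤ,
        ((fun i => (z i : ℝ)) ∈
            intrinsicInterior ℝ (NewtG 2 h (fun i => if i.1 = 0 then 3 else 0))
          ↔ z = fun _ => 2)) := by
  refine ⟨fun h l hh hl => ?_, fun h hh => ?_⟩
  · rw [newtG_eq_truncatedTriangle hh hl]
    constructor
    · rintro ⟨p, hp⟩
      obtain ⟨rfl, hc⟩ :=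
        eq_three_of_reflexivePolytope_truncatedTriangle (by omega) (min_le_right h l) hp
      exact ⟨rfl, (le_min_iff.1 hc).1⟩
    · rintro ⟨rfl, hh⟩
      exact ⟨_, reflexivePolytope_truncatedTriangle_three (le_min hh (by norm_num))
        (min_le_right h 3)⟩
  · rw [newtG_eq_truncatedTriangle (by omega) three_pos, min_eq_right hh]
    refine ⟨?_, fun z => ?_⟩
    · have e₁ : (fun i : Fin 2 => if i.1 = 0 then (3 : ℝ) else 0) = ![3, 0] := by
        ext i; fin_cases i <;> simp
      have e₂ : (fun _ : Fin 2 => (3 : ℝ)) = ![3, 3] := by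
        ext i; fin_cases i <;> simp
      have e₃ : (fun i : Fin 2 => if i.1 = 0 then (0 : ℝ) else 3) = ![0, 3] := by
        ext i; fin_cases i <;> simp
      rw [e₁, e₂, e₃, Nat.cast_ofNat, truncatedTriangle_self_eq_convexHull three_pos]
      rfl
    · rw [cast_mem_intrinsicInterior_truncatedTriangle three_pos le_rfl]
      constructor
      · intro hz
        ext i; fin_cases i <;> simp <;> omega
      · rintro rfl
        norm_num
end
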